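/- arXiv:1606.01575 — 8 statements merged into one kernel-verified Lean document; each statement's English description precedes it below -/
import Mathlib

section
/- Let X be a metric space satisfying the four point condition with constant δ ≥ 0 (for all x,y,s,t: d(x,y)+d(s,t) ≤ max(d(x,s)+d(y,t), d(x,t)+d(y,s)) + 2δ). Then for every isometry f of X and every x ∈ X, d(f²x, x) ≤ d(fx, x) + d∞(f) + 2δ, where d∞(f) = lim_{n→∞} d(fⁿx, x)/n is the stable length of f. -/
open Filter Topology Function

/-- In a metric space satisfying the four point condition with
constant `δ ≥ 0`, every isometry `f` satisfies
`d(f²x, x) ≤ d(fx, x) + d∞(f) + 2δ`, where `d∞(f) = lim_n d(fⁿx,x)/n`. -/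
theorem stmt0 {X : Type*} [MetricSpace X] (δ : ℝ) (hδ : 0 ≤ δ)
    (hfpc : ∀ x y s t : X, dist x y + dist s t ≤
      max (dist x s + dist y t) (dist x t + dist y s) + 2 * δ)
    (f : X → X) (hf : Isometry f) (hfs : Function.Surjective f)
    (x : X) (l : ℝ)
    (hl : Tendsto (fun n : ℕ => dist (f^[n] x) x / n) atTop (nhds l)) :
    dist (f^[2] x) x ≤ dist (f x) x + l + 2 * δ := by
  by_contra hcon
  push_neg at hcon
  set a : ℕ → ℝ := fun n => dist (f^[n] x) x with ha
  set c : ℝ := a 2 - a 1 - 2 * δ with hc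
  have hl0 : 0 ≤ l :=
    le_of_tendsto_of_tendsto' tendsto_const_nhds hl (fun n => by positivity)
  have ha1 : a 1 = dist (f x) x := by simp [ha]
  have hcl : l < c := by
    rw [hc, ha1]
    linarith
  have hcpos : 0 < c := lt_of_le_of_lt hl0 hcl
  have hdist : ∀ i j : ℕ, dist (f^[i] x) (f^[i + j] x) = a j := by
    intro i j
    induction i with
    | zero =>
      simp only [Function.iterate_zero_apply, Nat.zero_add]
      exact dist_comm _ _
    | succ n ih =>
      have h1 : n + 1 + j = (n + j) + 1 := by omega
      rw [h1, Function.iterate_succ_apply, Function.iterate_succ_apply]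
      rw [show f^[n] (f x) = f^[n + 1] x from (Function.iterate_succ_apply f n x).symm,
        show f^[n + j] (f x) = f^[n + j + 1] x from (Function.iterate_succ_apply f (n+j) x).symm,
        Function.iterate_succ_apply', Function.iterate_succ_apply', hf.dist_eq]
      rw [show n + j = n + j from rfl] at ih
      exact ih
  have key : ∀ m : ℕ, a 2 + a (m + 2) ≤ a 1 + max (a (m + 1)) (a (m + 3)) + 2 * δ := by
    intro m
    have h := hfpc x (f^[2] x) (f^[1] x) (f^[m + 3] x)
    have e1 : dist x (f^[2] x) = a 2 := dist_comm _ _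
    have e2 : dist (f^[1] x) (f^[m + 3] x) = a (m + 2) := by
      have := hdist 1 (m + 2); rwa [show 1 + (m + 2) = m + 3 by omega] at this
    have e3 : dist x (f^[1] x) = a 1 := dist_comm _ _
    have e4 : dist (f^[2] x) (f^[m + 3] x) = a (m + 1) := by
      have := hdist 2 (m + 1); rwa [show 2 + (m + 1) = m + 3 by omega] at this
    have e5 : dist x (f^[m + 3] x) = a (m + 3) := dist_comm _ _
    have e6 : dist (f^[2] x) (f^[1] x) = a 1 := by
      rw [dist_comm]
      have := hdist 1 1; rwa [show 1 + 1 = 2 by omega] at this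
    rw [e1, e2, e3, e4, e5, e6] at h
    have hm : max (a 1 + a (m + 1)) (a (m + 3) + a 1)
        ≤ a 1 + max (a (m + 1)) (a (m + 3)) := by
      apply max_le
      · linarith [le_max_left (a (m + 1)) (a (m + 3))]
      · linarith [le_max_right (a (m + 1)) (a (m + 3))]
    linarith
  have hQ : ∀ m : ℕ, a (m + 2) + c ≤ a (m + 3) := by
    intro m
    induction m with
    | zero =>
      have h := key 0
      have h1 : 0 ≤ a 1 := by positivity
      rcases max_cases (a 1) (a 3) with ⟨he, _⟩ | ⟨he, _⟩ <;> rw [he] at h <;> linarith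
    | succ n ih =>
      have h := key (n + 1)
      rcases max_cases (a (n + 2)) (a (n + 4)) with ⟨he, _⟩ | ⟨he, _⟩ <;>
        rw [he] at h
      · linarith
      · have : n + 1 + 2 = n + 3 := rfl
        rw [this] at h
        linarith
  have growth : ∀ m : ℕ, a 2 + m * c ≤ a (m + 2) := by
    intro m
    induction m with
    | zero => simp
    | succ n ih =>
      have := hQ n
      push_cast
      have : n + 1 + 2 = n + 3 := rfl
      rw [this]
      push_cast
      linarith [hQ n]
  have htend : Tendsto (fun n : ℕ => (a 2 - 2 * c) / n + c) atTop (nhds c) := by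
    have := (tendsto_const_div_atTop_nhds_zero_nat (a 2 - 2 * c)).add
      (tendsto_const_nhds : Tendsto (fun _ : ℕ => c) atTop (nhds c))
    simpa using this
  have hle : c ≤ l := by
    refine le_of_tendsto_of_tendsto htend hl ?_
    filter_upwards [eventually_ge_atTop 2] with n hn
    have hn0 : (0 : ℝ) < n := by positivity
    have hgr : a 2 + ((n : ℝ) - 2) * c ≤ a n := by
      obtain ⟨m, rfl⟩ := Nat.exists_eq_add_of_le hn
      have := growth m
      push_cast
      have h2 : 2 + m = m + 2 := by ring
      rw [h2]
      convert this using 2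
      ring
    rw [div_add' _ _ _ (ne_of_gt hn0), div_le_div_iff₀ hn0 hn0]
    ring_nf
    nlinarith [hgr]
  linarith
end

section
/- Let X be a δ-hyperbolic metric space (four point condition) and let f, g be isometries of X. Then for every x ∈ X: d(fgx, x) ≤ max( d(fx,x) + d∞(g), d(gx,x) + d∞(f), (d(fx,x) + d(gx,x) + d∞(fg))/2 ) + 6δ. -/
open Filter Topology Function

private lemma limit_nonneg' {X : Type*} [MetricSpace X] (h : X → X) (x : X) (l : ℝ)
    (hl : Tendsto (fun n : ℕ => dist (h^[n] x) x / n) atTop (nhds l)) : 0 ≤ l :=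
  ge_of_tendsto' hl fun n => by positivity

private lemma iter_dist' {X : Type*} [MetricSpace X] {h : X → X} (hh : Isometry h)
    (m : ℕ) (u v : X) : dist (h^[m] u) (h^[m] v) = dist u v := by
  induction m with
  | zero => simp
  | succ n ih =>
      rw [Function.iterate_succ_apply', Function.iterate_succ_apply', hh.dist_eq, ih]

/-- Key lemma: the stable length of an isometry `h` is at least
`d(h²x,x) - d(hx,x) - 2δ`. -/
private lemma lemA {X : Type*} [MetricSpace X] {δ : ℝ} (hδ : 0 ≤ δ)
    (hfpc : ∀ x y s t : X, dist x y + dist s t ≤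
      max (dist x s + dist y t) (dist x t + dist y s) + 2 * δ)
    {h : X → X} (hh : Isometry h) (x : X) {l : ℝ}
    (hl : Tendsto (fun n : ℕ => dist (h^[n] x) x / n) atTop (nhds l)) :
    dist (h (h x)) x - dist (h x) x - 2 * δ ≤ l := by
  set L := dist (h x) x with hLdef
  set K := dist (h (h x)) x with hKdef
  rcases le_or_gt (K - L - 2 * δ) 0 with hc0 | hc0
  · linarith [limit_nonneg' h x l hl]
  set c := K - L - 2 * δ with hcdef
  have hKL : K ≤ 2 * L := by
    have ht := dist_triangle (h (h x)) (h x) x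
    have e : dist (h (h x)) (h x) = L := by rw [hh.dist_eq]
    linarith
  have h2 : h^[2] x = h (h x) := by
    rw [Function.iterate_succ_apply', Function.iterate_one]
  have hdist1 : ∀ n : ℕ, dist (h^[n] x) (h^[n + 1] x) = L := by
    intro n
    rw [Function.iterate_succ_apply, iter_dist' hh, dist_comm]
  have hdist2 : ∀ n : ℕ, dist (h^[n] x) (h^[n + 2] x) = K := by
    intro n
    rw [Function.iterate_add_apply, iter_dist' hh, h2, dist_comm]
  have step : ∀ n : ℕ, dist x (h^[n + 1] x) + c ≤ dist x (h^[n + 2] x) := by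
    intro n
    induction n with
    | zero =>
        have e1 : dist x (h^[0 + 1] x) = L := by
          rw [show (0 + 1 : ℕ) = 1 from rfl, Function.iterate_one, dist_comm]
        have e2 : dist x (h^[0 + 2] x) = K := by
          rw [show (0 + 2 : ℕ) = 2 from rfl, h2, dist_comm]
        rw [e1, e2]; linarith
    | succ n ih =>
        have key := hfpc (h^[n + 1] x) (h^[n + 3] x) (h^[n + 2] x) x
        have e1 : dist (h^[n + 1] x) (h^[n + 3] x) = K := hdist2 (n + 1)
        have e2 : dist (h^[n + 1] x) (h^[n + 2] x) = L := hdist1 (n + 1)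
        have e3 : dist (h^[n + 3] x) (h^[n + 2] x) = L := by
          rw [dist_comm]; exact hdist1 (n + 2)
        have e4 : dist (h^[n + 2] x) x = dist x (h^[n + 2] x) := dist_comm _ _
        have e5 : dist (h^[n + 1] x) x = dist x (h^[n + 1] x) := dist_comm _ _
        have e6 : dist (h^[n + 3] x) x = dist x (h^[n + 3] x) := dist_comm _ _
        rw [e1, e2, e3, e4, e5, e6] at key
        have goal_eq : dist x (h^[n + 1 + 1] x) = dist x (h^[n + 2] x) := rfl
        have goal_eq2 : dist x (h^[n + 1 + 2] x) = dist x (h^[n + 3] x) := rfl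
        rw [goal_eq, goal_eq2]
        rcases le_total (L + dist x (h^[n + 3] x)) (dist x (h^[n + 1] x) + L) with hm | hm
        · rw [max_eq_right hm] at key; linarith
        · rw [max_eq_left hm] at key; linarith
  have grow : ∀ n : ℕ, L + (n : ℝ) * c ≤ dist x (h^[n + 1] x) := by
    intro n
    induction n with
    | zero =>
        have e1 : dist x (h^[0 + 1] x) = L := by
          rw [show (0 + 1 : ℕ) = 1 from rfl, Function.iterate_one, dist_comm]
        rw [e1]; simp
    | succ n ih =>
        have := step n
        push_cast
        push_cast at ih
        linarith
  have bound : ∀ n : ℕ, (n : ℝ) * c ≤ dist (h^[n] x) x := by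
    intro n
    cases n with
    | zero => simp
    | succ n =>
        have := grow n
        have hcL : c ≤ L := by linarith
        rw [dist_comm]
        push_cast
        linarith
  have hcl : c ≤ l := by
    refine ge_of_tendsto hl (eventually_atTop.2 ⟨1, fun n hn => ?_⟩)
    have hn0 : (0 : ℝ) < n := by exact_mod_cast Nat.lt_of_lt_of_le Nat.zero_lt_one hn
    rw [le_div_iff₀ hn0]
    have := bound n
    linarith
  linarith

/-- **main inequality.** In a `δ`-hyperbolic metric space (four
point condition), for isometries `f, g` and any `x`:
`d(fgx,x) ≤ max(d(fx,x)+d∞(g), d(gx,x)+d∞(f), (d(fx,x)+d(gx,x)+d∞(fg))/2) + 6δ`. -/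
theorem stmt4 {X : Type*} [MetricSpace X] (δ : ℝ) (hδ : 0 ≤ δ)
    (hfpc : ∀ x y s t : X, dist x y + dist s t ≤
      max (dist x s + dist y t) (dist x t + dist y s) + 2 * δ)
    (f g : X → X) (hf : Isometry f) (hfs : Function.Surjective f)
    (hg : Isometry g) (hgs : Function.Surjective g)
    (x : X) (lf lg lfg : ℝ)
    (hlf : Tendsto (fun n : ℕ => dist (f^[n] x) x / n) atTop (nhds lf))
    (hlg : Tendsto (fun n : ℕ => dist (g^[n] x) x / n) atTop (nhds lg))
    (hlfg : Tendsto (fun n : ℕ => dist ((f ∘ g)^[n] x) x / n) atTop (nhds lfg)) :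
    dist (f (g x)) x ≤
      max (max (dist (f x) x + lg) (dist (g x) x + lf))
        ((dist (f x) x + dist (g x) x + lfg) / 2) + 6 * δ := by
  obtain ⟨p, hp⟩ := hfs x
  obtain ⟨q', hq'⟩ := hgs x
  obtain ⟨t, ht⟩ := hfs x
  obtain ⟨s, hs⟩ := hgs t
  have hfg : Isometry (f ∘ g) := hf.comp hg
  -- lower bounds on the stable lengths
  have LF : dist (f (f x)) x - dist (f x) x - 2 * δ ≤ lf := lemA hδ hfpc hf x hlf
  have LG : dist (g (g x)) x - dist (g x) x - 2 * δ ≤ lg := lemA hδ hfpc hg x hlg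
  have LFG : dist (f (g (f (g x)))) x - dist (f (g x)) x - 2 * δ ≤ lfg := by
    have := lemA hδ hfpc hfg x hlfg
    simpa using this
  have lf0 : 0 ≤ lf := limit_nonneg' f x lf hlf
  have lg0 : 0 ≤ lg := limit_nonneg' g x lg hlg
  -- distance identities
  have d1 : dist p (g x) = dist (f (g x)) x := by
    rw [← hf.dist_eq, hp, dist_comm]
  have d2 : dist x q' = dist (g x) x := by
    rw [← hg.dist_eq, hq']
  have d3 : dist p x = dist (f x) x := by
    rw [← hf.dist_eq, hp, dist_comm]
  have d4 : dist (g x) q' = dist (g (g x)) x := by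
    rw [← hg.dist_eq, hq']
  have d6 : dist x (f x) = dist (f x) x := dist_comm _ _
  have d8 : dist p (f x) = dist (f (f x)) x := by
    rw [← hf.dist_eq, hp, dist_comm]
  have d9 : dist q' x = dist (g x) x := by
    rw [dist_comm, d2]
  have d10 : dist x (f (g x)) = dist (f (g x)) x := dist_comm _ _
  have d11 : dist (f x) (f (g x)) = dist (g x) x := by
    rw [hf.dist_eq, dist_comm]
  have d13 : dist x s = dist (f (g x)) x := by
    rw [← hg.dist_eq, hs, ← hf.dist_eq, ht]
  have d14 : dist (f (g x)) s = dist (f (g (f (g x)))) x := by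
    rw [← hg.dist_eq, hs, ← hf.dist_eq, ht]
  have d15 : dist q' s = dist (f x) x := by
    rw [← hg.dist_eq, hq', hs, ← hf.dist_eq, ht]
  -- four instances of the four point condition
  have H1 := hfpc p (g x) x q'
  have H2 := hfpc p q' x (f x)
  have H3 := hfpc q' (f x) x (f (g x))
  have H4 := hfpc q' (f (g x)) x s
  -- bounds relating to the goal's max
  have M1 : dist (f x) x + lg ≤
      max (max (dist (f x) x + lg) (dist (g x) x + lf))
        ((dist (f x) x + dist (g x) x + lfg) / 2) :=
    le_max_of_le_left (le_max_left _ _)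
  have M2 : dist (g x) x + lf ≤
      max (max (dist (f x) x + lg) (dist (g x) x + lf))
        ((dist (f x) x + dist (g x) x + lfg) / 2) :=
    le_max_of_le_left (le_max_right _ _)
  have M3 : (dist (f x) x + dist (g x) x + lfg) / 2 ≤
      max (max (dist (f x) x + lg) (dist (g x) x + lf))
        ((dist (f x) x + dist (g x) x + lfg) / 2) :=
    le_max_right _ _
  rcases le_total (dist p x + dist (g x) q') (dist p q' + dist (g x) x) with hm1 | hm1
  · rw [max_eq_right hm1] at H1
    rcases le_total (dist p x + dist q' (f x)) (dist p (f x) + dist q' x) with hm2 | hm2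
    · rw [max_eq_right hm2] at H2
      linarith [d1, d2, d3, d8, d9, d6, LF, M2, hδ]
    · rw [max_eq_left hm2] at H2
      rcases le_total (dist q' x + dist (f x) (f (g x))) (dist q' (f (g x)) + dist (f x) x) with hm3 | hm3
      · rw [max_eq_right hm3] at H3
        rcases le_total (dist q' x + dist (f (g x)) s) (dist q' s + dist (f (g x)) x) with hm4 | hm4
        · rw [max_eq_right hm4] at H4
          linarith [d1, d2, d3, d6, d9, d10, d11, d13, d14, d15, M1, M3, LFG, hδ]
        · rw [max_eq_left hm4] at H4
          linarith [d1, d2, d3, d6, d9, d10, d11, d13, d14, d15, M1, M3, LFG, hδ]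
      · rw [max_eq_left hm3] at H3
        linarith [d1, d2, d3, d6, d9, d10, d11, M2, lf0, hδ]
  · rw [max_eq_left hm1] at H1
    linarith [d1, d2, d3, d4, LG, M1, hδ]
end

section
/- Let X be a δ-hyperbolic metric space and f, g isometries of X. If x ∈ X satisfies d(fx, gx) > max(d(fx,x) + d∞(g), d(gx,x) + d∞(f)) + 4δ, then |d(fgx,x) − d(fx,gx)| ≤ 2δ and |d(fgx,x) − d(gfx,x)| ≤ 4δ. -/
open Filter Topology Function

/-- Lower bound on stable length: `lf ≥ d(f²x,x) − d(fx,x) − 2δ`. -/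
lemma stable_lb {X : Type*} [MetricSpace X] (δ : ℝ) (hδ : 0 ≤ δ)
    (hfpc : ∀ x y s t : X, dist x y + dist s t ≤
      max (dist x s + dist y t) (dist x t + dist y s) + 2 * δ)
    (f : X → X) (hf : Isometry f) (x : X) (lf : ℝ)
    (hlf : Tendsto (fun n : ℕ => dist (f^[n] x) x / n) atTop (nhds lf)) :
    dist (f (f x)) x - dist (f x) x - 2 * δ ≤ lf := by
  set a : ℕ → ℝ := fun k => dist (f^[k] x) x with ha
  have h0 : (0:ℝ) ≤ lf :=
    le_of_tendsto_of_tendsto' tendsto_const_nhds hlf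
      (fun n => div_nonneg dist_nonneg (Nat.cast_nonneg n))
  have ha1 : a 1 = dist (f x) x := by simp [ha]
  have ha2 : a 2 = dist (f (f x)) x := by
    simp [ha, Function.iterate_succ_apply']
  set m : ℝ := dist (f (f x)) x - dist (f x) x - 2 * δ with hm
  have hma : m = a 2 - a 1 - 2 * δ := by rw [ha1, ha2]
  rcases le_or_gt m 0 with hm0 | hm0
  · linarith
  have hiter : ∀ n : ℕ, Isometry (f^[n]) := fun n => by
    induction n with
    | zero => simpa using isometry_id
    | succ k ih => rw [Function.iterate_succ]; exact ih.comp hf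
  have hd2 : ∀ j k : ℕ, dist (f^[j] x) (f^[j + k] x) = a k := by
    intro j k
    rw [Function.iterate_add_apply, (hiter j).dist_eq, dist_comm]
  have step : ∀ n : ℕ, a (n+1) + m ≤ a (n+2) := by
    intro n
    induction n with
    | zero => linarith [hma]
    | succ k ih =>
      have H := hfpc x (f^[k+2] x) (f^[k+1] x) (f^[k+3] x)
      have d1 : dist (f^[k+1] x) (f^[k+3] x) = a 2 := by
        have := hd2 (k+1) 2
        rwa [show k+1+2 = k+3 by omega] at this
      have d2 : dist (f^[k+2] x) (f^[k+3] x) = a 1 := by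
        have := hd2 (k+2) 1
        rwa [show k+2+1 = k+3 by omega] at this
      have d3 : dist (f^[k+2] x) (f^[k+1] x) = a 1 := by
        rw [dist_comm]
        have := hd2 (k+1) 1
        rwa [show k+1+1 = k+2 by omega] at this
      have c1 : dist x (f^[k+2] x) = a (k+2) := dist_comm _ _
      have c2 : dist x (f^[k+1] x) = a (k+1) := dist_comm _ _
      have c3 : dist x (f^[k+3] x) = a (k+3) := dist_comm _ _
      rw [d1, d2, d3, c1, c2, c3] at H
      rcases max_cases (a (k+1) + a 1) (a (k+3) + a 1) with ⟨h, _⟩ | ⟨h, _⟩ <;>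
        rw [h] at H <;> linarith [hma, ih]
  have chain : ∀ n : ℕ, a 1 + n * m ≤ a (n+1) := by
    intro n
    induction n with
    | zero => simp
    | succ k ih =>
      have := step k
      push_cast
      push_cast at ih
      linarith
  have hb : Tendsto (fun n : ℕ => m + (a 1 - m) / n) atTop (nhds m) := by
    have h2 := tendsto_const_div_atTop_nhds_zero_nat (a 1 - m)
    have : Tendsto (fun _ : ℕ => m) atTop (nhds m) := tendsto_const_nhds
    have := this.add h2
    simpa using this
  have hle : m ≤ lf := by
    refine le_of_tendsto_of_tendsto hb hlf ?_
    filter_upwards [eventually_ge_atTop 1] with n hn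
    obtain ⟨k, rfl⟩ : ∃ k, n = k + 1 := ⟨n - 1, by omega⟩
    have hN : (0:ℝ) < (k:ℝ) + 1 := by positivity
    have heq : m + (a 1 - m) / ((k:ℝ)+1) = (a 1 + (k:ℝ) * m) / ((k:ℝ)+1) := by
      field_simp
      ring
    have hch := chain k
    show m + (a 1 - m) / ((k:ℕ)+1 : ℕ) ≤ a (k+1) / ((k:ℕ)+1 : ℕ)
    push_cast
    rw [heq]
    exact (div_le_div_iff_of_pos_right hN).mpr hch
  linarith

/-- In a `δ`-hyperbolic metric space, if
`d(fx,gx) > max(d(fx,x)+d∞(g), d(gx,x)+d∞(f)) + 4δ`, then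
`|d(fgx,x) − d(fx,gx)| ≤ 2δ` and `|d(fgx,x) − d(gfx,x)| ≤ 4δ`. -/
theorem stmt5 {X : Type*} [MetricSpace X] (δ : ℝ) (hδ : 0 ≤ δ)
    (hfpc : ∀ x y s t : X, dist x y + dist s t ≤
      max (dist x s + dist y t) (dist x t + dist y s) + 2 * δ)
    (f g : X → X) (hf : Isometry f) (hfs : Function.Surjective f)
    (hg : Isometry g) (hgs : Function.Surjective g)
    (x : X) (lf lg : ℝ)
    (hlf : Tendsto (fun n : ℕ => dist (f^[n] x) x / n) atTop (nhds lf))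
    (hlg : Tendsto (fun n : ℕ => dist (g^[n] x) x / n) atTop (nhds lg))
    (hsep : dist (f x) (g x) >
      max (dist (f x) x + lg) (dist (g x) x + lf) + 4 * δ) :
    |dist (f (g x)) x - dist (f x) (g x)| ≤ 2 * δ ∧
    |dist (f (g x)) x - dist (g (f x)) x| ≤ 4 * δ := by
  have key : ∀ (f g : X → X), Isometry f → Isometry g → ∀ lf lg : ℝ,
      Tendsto (fun n : ℕ => dist (f^[n] x) x / n) atTop (nhds lf) →
      dist (f x) (g x) > max (dist (f x) x + lg) (dist (g x) x + lf) + 4 * δ →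
      |dist (f (g x)) x - dist (f x) (g x)| ≤ 2 * δ := by
    intro f g hf hg lf lg hlf hsep
    have hlb := stable_lb δ hδ hfpc f hf x lf hlf
    have hD : dist (g x) x + lf + 4 * δ < dist (f x) (g x) := by
      have := le_max_right (dist (f x) x + lg) (dist (g x) x + lf)
      linarith
    have H1 := hfpc (f x) x (f (f x)) (f (g x))
    have H2 := hfpc (f x) (f (f x)) x (f (g x))
    simp only [hf.dist_eq] at H1 H2
    have c1 : dist x (f x) = dist (f x) x := dist_comm _ _
    have c2 : dist x (g x) = dist (g x) x := dist_comm _ _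
    have c3 : dist x (f (g x)) = dist (f (g x)) x := dist_comm _ _
    have c4 : dist x (f (f x)) = dist (f (f x)) x := dist_comm _ _
    simp only [c1, c2, c3, c4] at H1 H2
    -- H1 : A + D ≤ max (A + C) (B + a2) + 2δ
    -- H2 : A + C ≤ max (A + D) (B + a2) + 2δ
    have hU : dist (g x) x + dist (f (f x)) x + 2 * δ < dist (f x) x + dist (f x) (g x) := by
      linarith
    have hCD1 : dist (f x) (g x) ≤ dist (f (g x)) x + 2 * δ := by
      rcases max_cases (dist (f x) x + dist (f (g x)) x)
        (dist (g x) x + dist (f (f x)) x) with ⟨h, _⟩ | ⟨h, _⟩ <;>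
        rw [h] at H1 <;> linarith
    have hCD2 : dist (f (g x)) x ≤ dist (f x) (g x) + 2 * δ := by
      rcases max_cases (dist (f x) x + dist (f x) (g x))
        (dist (g x) x + dist (f (f x)) x) with ⟨h, _⟩ | ⟨h, _⟩ <;>
        rw [h] at H2 <;> linarith
    rw [abs_le]
    constructor <;> linarith
  have h1 := key f g hf hg lf lg hlf hsep
  have h2 := key g f hg hf lg lf hlg (by
    rw [dist_comm (g x) (f x), max_comm]
    exact hsep)
  refine ⟨h1, ?_⟩
  obtain ⟨h1a, h1b⟩ := abs_le.mp h1
  obtain ⟨h2a, h2b⟩ := abs_le.mp h2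
  have hc : dist (g x) (f x) = dist (f x) (g x) := dist_comm _ _
  rw [abs_le]
  constructor <;> linarith
end

section
/- Let X be a δ-hyperbolic metric space, K ≥ 7δ, and f, g isometries of X such that for some x ∈ X, d(fx, gx) > max(d(fx,x) + d∞(g), d(gx,x) + d∞(f)) + K. Then d∞(fg) > d∞(f) + d∞(g) + 2K − 14δ; in particular d∞(fg) > 0, so fg is a hyperbolic isometry. -/
/-!
A broken line whose steps are longer than `2c + 2δ` and whose Gromov products at the corners are
at most `c` is a quasi-geodesic in a `δ`-hyperbolic space: each step loses at most `2(c + δ)` of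
its length. Write `m = (f x | g x)_x`, `x' = f⁻¹ x`, `y' = g⁻¹ x`. Applied to the orbit of `x`
under `f`, this shows that `(x' | f x)_x > m + δ`, for otherwise `d∞(f) ≥ d(x, f x) - 2m - 4δ`,
against the hypothesis. Hyperbolicity at `x` then gives `(x' | g x)_x ≤ m + δ`, and symmetrically
`(y' | f x)_x ≤ m + δ`. These are, up to isometry, the corner Gromov products of the broken orbit
`x, f x, f g x, f g f x, …` of `f ∘ g`, so `d∞(fg) ≥ d(x, f x) + d(x, g x) - 4m - 8δ`, which is
more than `d∞(f) + d∞(g) + 2K - 8δ`.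
-/

open Filter Topology Function

section

variable {X : Type*} [MetricSpace X]

noncomputable def gromovProduct (w p q : X) : ℝ := (dist p w + dist q w - dist p q) / 2

lemma gromovProduct_comm (w p q : X) : gromovProduct w p q = gromovProduct w q p := by
  unfold gromovProduct; rw [dist_comm p q]; ring

lemma gromovProduct_nonneg (w p q : X) : 0 ≤ gromovProduct w p q := by
  unfold gromovProduct; linarith [dist_triangle_right p q w]

lemma gromovProduct_self_left (w q : X) : gromovProduct w w q = 0 := by
  unfold gromovProduct; rw [dist_self, dist_comm]; ring

lemma gromovProduct_add_gromovProduct_swap (w p q : X) :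
    gromovProduct w p q + gromovProduct p w q = dist w p := by
  unfold gromovProduct; rw [dist_comm p w, dist_comm q p, dist_comm w q]; ring

lemma Isometry.gromovProduct_map {φ : X → X} (hφ : Isometry φ) (w p q : X) :
    gromovProduct (φ w) (φ p) (φ q) = gromovProduct w p q := by
  simp only [gromovProduct, hφ.dist_eq]

lemma le_of_tendsto_div_of_mul_le {u : ℕ → ℝ} {l c : ℝ}
    (h : Tendsto (fun n : ℕ => u n / n) atTop (𝓝 l)) (hu : ∀ n : ℕ, c * n ≤ u n) : c ≤ l := by
  refine ge_of_tendsto h ?_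
  filter_upwards [eventually_gt_atTop 0] with n hn
  exact (le_div_iff₀ (by exact_mod_cast hn)).2 (hu n)

lemma Function.Periodic.sum_range_mul {M : Type*} [AddCommMonoid M] {s : ℕ → M} {p : ℕ}
    (h : Periodic s p) (n : ℕ) :
    ∑ i ∈ Finset.range (n * p), s i = n • ∑ i ∈ Finset.range p, s i := by
  induction n with
  | zero => simp
  | succ n ih =>
    rw [Nat.succ_mul, Finset.sum_range_add, ih, succ_nsmul]
    congr 1
    refine Finset.sum_congr rfl fun i _ => ?_
    rw [add_comm]
    exact h.nat_mul n i

lemma nonneg_of_tendsto_dist_iterate_div {φ : X → X} {x : X} {l : ℝ}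
    (hl : Tendsto (fun n : ℕ => dist (φ^[n] x) x / n) atTop (𝓝 l)) : 0 ≤ l :=
  le_of_tendsto_div_of_mul_le hl fun n => by simp

def FourPointCondition (δ : ℝ) (X : Type*) [MetricSpace X] : Prop :=
  ∀ x y s t : X, dist x y + dist s t ≤ max (dist x s + dist y t) (dist x t + dist y s) + 2 * δ

namespace FourPointCondition

variable {δ : ℝ}

lemma min_gromovProduct_le (hX : FourPointCondition δ X) (w p q r : X) :
    min (gromovProduct w p q) (gromovProduct w q r) - δ ≤ gromovProduct w p r := by
  have h := hX p r w q
  simp only [gromovProduct]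
  rcases le_total (dist p w + dist r q) (dist p q + dist r w) with hle | hle
  · rw [max_eq_right hle] at h
    linarith [min_le_left ((dist p w + dist q w - dist p q) / 2)
      ((dist q w + dist r w - dist q r) / 2), dist_comm w q]
  · rw [max_eq_left hle] at h
    linarith [min_le_right ((dist p w + dist q w - dist p q) / 2)
      ((dist q w + dist r w - dist q r) / 2), dist_comm w q, dist_comm r q]

lemma gromovProduct_le_of_lt (hX : FourPointCondition δ X) {w p q r : X} {c : ℝ}
    (hpq : c + δ < gromovProduct w p q) (hpr : gromovProduct w p r ≤ c) :
    gromovProduct w q r ≤ c + δ := by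
  by_contra! hqr
  linarith [hX.min_gromovProduct_le w p q r, lt_min hpq hqr]

lemma gromovProduct_chain_le (hX : FourPointCondition δ X) (hδ : 0 ≤ δ) {c : ℝ} {y : ℕ → X}
    (hstep : ∀ i, 2 * c + 2 * δ < dist (y i) (y (i + 1)))
    (hprod : ∀ i, gromovProduct (y (i + 1)) (y i) (y (i + 2)) ≤ c) (n : ℕ) :
    gromovProduct (y n) (y 0) (y (n + 1)) ≤ c + δ := by
  induction n with
  | zero =>
    rw [gromovProduct_self_left]
    linarith [gromovProduct_nonneg (y 1) (y 0) (y 2), hprod 0]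
  | succ n ih =>
    -- `ih` and the long step give `(y n | y 0)_{y (n+1)} > c + δ`; hyperbolicity then passes the
    -- bound on `(y n | y (n+2))_{y (n+1)}` on to `(y 0 | y (n+2))_{y (n+1)}`.
    refine hX.gromovProduct_le_of_lt (p := y n) ?_ (hprod n)
    have := gromovProduct_add_gromovProduct_swap (y (n + 1)) (y n) (y 0)
    rw [gromovProduct_comm (y n), dist_comm] at this
    linarith [hstep n]

lemma sum_sub_le_dist_of_chain (hX : FourPointCondition δ X) (hδ : 0 ≤ δ) {c : ℝ} {y : ℕ → X}
    (hstep : ∀ i, 2 * c + 2 * δ < dist (y i) (y (i + 1)))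
    (hprod : ∀ i, gromovProduct (y (i + 1)) (y i) (y (i + 2)) ≤ c) (n : ℕ) :
    ∑ i ∈ Finset.range n, (dist (y i) (y (i + 1)) - 2 * (c + δ)) ≤ dist (y 0) (y n) := by
  induction n with
  | zero => simp
  | succ n ih =>
    have hn := hX.gromovProduct_chain_le hδ hstep hprod n
    rw [Finset.sum_range_succ]
    unfold gromovProduct at hn
    linarith [dist_comm (y (n + 1)) (y n)]

lemma sum_sub_le_of_periodic_chain (hX : FourPointCondition δ X) (hδ : 0 ≤ δ) {c l : ℝ}
    {φ : X → X} (hφ : Isometry φ) {p : ℕ} (hp : 0 < p) {y : ℕ → X}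
    (hy : ∀ i, y (i + p) = φ (y i))
    (hstep : ∀ i < p, 2 * c + 2 * δ < dist (y i) (y (i + 1)))
    (hprod : ∀ i < p, gromovProduct (y (i + 1)) (y i) (y (i + 2)) ≤ c)
    (hl : Tendsto (fun n : ℕ => dist (φ^[n] (y 0)) (y 0) / n) atTop (𝓝 l)) :
    ∑ i ∈ Finset.range p, (dist (y i) (y (i + 1)) - 2 * (c + δ)) ≤ l := by
  have hstep_per : Periodic (fun i => dist (y i) (y (i + 1))) p := fun i => by
    simp only [add_right_comm i p 1, hy, hφ.dist_eq]
  have hprod_per : Periodic (fun i => gromovProduct (y (i + 1)) (y i) (y (i + 2))) p := fun i => by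
    simp only [add_right_comm i p, hy, hφ.gromovProduct_map]
  have horbit : ∀ n, φ^[n] (y 0) = y (n * p) := fun n => by
    induction n with
    | zero => simp
    | succ n ih => rw [iterate_succ_apply', ih, Nat.succ_mul, hy]
  refine le_of_tendsto_div_of_mul_le hl fun n => ?_
  have hchain := hX.sum_sub_le_dist_of_chain hδ (c := c) (y := y)
    (fun i => hstep_per.map_mod_nat i ▸ hstep _ (Nat.mod_lt i hp))
    (fun i => hprod_per.map_mod_nat i ▸ hprod _ (Nat.mod_lt i hp)) (n * p)
  rw [Periodic.sum_range_mul (fun i => congrArg (· - 2 * (c + δ)) (hstep_per i)),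
    nsmul_eq_mul] at hchain
  rw [horbit, dist_comm, mul_comm]
  exact hchain

lemma lt_gromovProduct_of_add_lt_dist (hX : FourPointCondition δ X) (hδ : 0 ≤ δ) {c l : ℝ}
    {φ : X → X} (hφ : Isometry φ) {x x' : X} (hx' : φ x' = x)
    (hl : Tendsto (fun n : ℕ => dist (φ^[n] x) x / n) atTop (𝓝 l))
    (hdist : l + 2 * (c + δ) < dist x (φ x)) : c < gromovProduct x (φ x) x' := by
  by_contra! hprod
  have hl0 := nonneg_of_tendsto_dist_iterate_div hl
  have hstep : ∀ i < 1, 2 * c + 2 * δ < dist (φ^[i] x) (φ^[i + 1] x) := by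
    simp only [Nat.lt_one_iff, forall_eq, iterate_zero_apply, zero_add, iterate_one]
    linarith
  have hprod' : ∀ i < 1, gromovProduct (φ^[i + 1] x) (φ^[i] x) (φ^[i + 2] x) ≤ c := by
    simp only [Nat.lt_one_iff, forall_eq, iterate_zero_apply, iterate_succ_apply', ← hx']
    rwa [hφ.gromovProduct_map, hx', gromovProduct_comm]
  have := hX.sum_sub_le_of_periodic_chain hδ hφ one_pos (y := fun i => φ^[i] x)
    (fun i => iterate_succ_apply' φ i x) hstep hprod' hl
  simp only [Finset.sum_range_one, iterate_zero_apply, zero_add, iterate_one] at this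
  linarith

lemma dist_add_dist_sub_le_of_comp (hX : FourPointCondition δ X) (hδ : 0 ≤ δ) {c l : ℝ}
    {f g : X → X} (hf : Isometry f) (hg : Isometry g) {x x' y' : X} (hx' : f x' = x)
    (hy' : g y' = x) (hfx : 2 * c + 2 * δ < dist x (f x)) (hgx : 2 * c + 2 * δ < dist x (g x))
    (hx'g : gromovProduct x x' (g x) ≤ c) (hy'f : gromovProduct x y' (f x) ≤ c)
    (hl : Tendsto (fun n : ℕ => dist ((f ∘ g)^[n] x) x / n) atTop (𝓝 l)) :
    dist x (f x) + dist x (g x) - 4 * (c + δ) ≤ l := by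
  -- The broken orbit `x, f x, f (g x), f (g (f x)), …`; its corner Gromov products are the
  -- translates of `(x' | g x)_x` and `(y' | f x)_x`.
  let y : ℕ → X := fun i => (f ∘ g)^[i / 2] (f^[i % 2] x)
  have hy : ∀ i, y (i + 2) = (f ∘ g) (y i) := fun i => by
    simp only [y, Nat.add_div_right i two_pos, Nat.add_mod_right, iterate_succ_apply']
  have hstep : ∀ i < 2, 2 * c + 2 * δ < dist (y i) (y (i + 1)) := by
    intro i hi
    interval_cases i
    · simpa [y] using hfx
    · simpa [y, hf.dist_eq] using hgx
  have hprod : ∀ i < 2, gromovProduct (y (i + 1)) (y i) (y (i + 2)) ≤ c := by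
    intro i hi
    interval_cases i
    · simpa [y, ← hx', hf.gromovProduct_map] using hx'g
    · simpa [y, ← hy', hf.gromovProduct_map, hg.gromovProduct_map] using hy'f
  have := hX.sum_sub_le_of_periodic_chain hδ (hf.comp hg) (p := 2) two_pos hy hstep hprod hl
  rw [Finset.sum_range_succ, Finset.sum_range_one] at this
  norm_num [y, hf.dist_eq] at this
  linarith

end FourPointCondition

end

/-- In a `δ`-hyperbolic metric space, if `K ≥ 7δ` and
`d(fx,gx) > max(d(fx,x)+d∞(g), d(gx,x)+d∞(f)) + K` for some `x`, then
`d∞(fg) > d∞(f) + d∞(g) + 2K − 14δ`; in particular `d∞(fg) > 0`, i.e. `fg` is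
a hyperbolic isometry. -/
theorem stmt6 {X : Type*} [MetricSpace X] (δ : ℝ) (hδ : 0 ≤ δ)
    (hfpc : ∀ x y s t : X, dist x y + dist s t ≤
      max (dist x s + dist y t) (dist x t + dist y s) + 2 * δ)
    (K : ℝ) (hK : 7 * δ ≤ K)
    (f g : X → X) (hf : Isometry f) (hfs : Function.Surjective f)
    (hg : Isometry g) (hgs : Function.Surjective g)
    (x : X) (lf lg lfg : ℝ)
    (hlf : Tendsto (fun n : ℕ => dist (f^[n] x) x / n) atTop (nhds lf))
    (hlg : Tendsto (fun n : ℕ => dist (g^[n] x) x / n) atTop (nhds lg))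
    (hlfg : Tendsto (fun n : ℕ => dist ((f ∘ g)^[n] x) x / n) atTop (nhds lfg))
    (hsep : dist (f x) (g x) >
      max (dist (f x) x + lg) (dist (g x) x + lf) + K) :
    lfg > lf + lg + 2 * K - 14 * δ ∧ 0 < lfg := by
  have hX : FourPointCondition δ X := hfpc
  obtain ⟨x', hx'⟩ := hfs x
  obtain ⟨y', hy'⟩ := hgs x
  have hlf0 := nonneg_of_tendsto_dist_iterate_div hlf
  have hlg0 := nonneg_of_tendsto_dist_iterate_div hlg
  set m := gromovProduct x (f x) (g x) with hm
  have hfx : lf + K + 2 * m < dist x (f x) := by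
    simp only [hm, gromovProduct, dist_comm x] at hsep ⊢
    linarith [le_max_right (dist (f x) x + lg) (dist (g x) x + lf)]
  have hgx : lg + K + 2 * m < dist x (g x) := by
    simp only [hm, gromovProduct, dist_comm x] at hsep ⊢
    linarith [le_max_left (dist (f x) x + lg) (dist (g x) x + lf)]
  have hfx' := hX.lt_gromovProduct_of_add_lt_dist hδ (c := m + δ) hf hx' hlf (by linarith)
  have hgy' := hX.lt_gromovProduct_of_add_lt_dist hδ (c := m + δ) hg hy' hlg (by linarith)
  have hx'g : gromovProduct x x' (g x) ≤ m + δ := hX.gromovProduct_le_of_lt hfx' le_rfl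
  have hy'f : gromovProduct x y' (f x) ≤ m + δ :=
    hX.gromovProduct_le_of_lt hgy' (gromovProduct_comm x (g x) (f x)).le
  have := hX.dist_add_dist_sub_le_of_comp hδ hf hg hx' hy' (by linarith) (by linarith)
    hx'g hy'f hlfg
  constructor <;> linarith
end

section
/- Let X be a δ-hyperbolic metric space and Σ a bounded set of isometries of X. Then for every x ∈ X: |Σ²|_x ≤ |Σ|_x + D(Σ) + 6δ, where |Σ|_x = sup_{f∈Σ} d(fx,x), Σ² is the set of products of two elements of Σ, and D(Σ) = lim_{n→∞} |Σⁿ|_x / n is the joint stable length. -/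
open Filter Topology Function

/-- The set `Sⁿ` of all compositions of `n` elements of `S`. -/
def powSet {X : Type*} (S : Set (X → X)) (n : ℕ) : Set (X → X) :=
  {g | ∃ l : List (X → X), l.length = n ∧ (∀ f ∈ l, f ∈ S) ∧ g = l.foldr (· ∘ ·) id}

/-- The joint displacement `|S|ₓ = sup_{f ∈ S} d(fx, x)`. -/
noncomputable def dispSup {X : Type*} [MetricSpace X] (x : X) (S : Set (X → X)) : ℝ :=
  sSup ((fun f => dist (f x) x) '' S)

namespace Stmt7Aux

variable {X : Type*}

lemma foldr_comp (l : List (X → X)) (a : X → X) :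
    l.foldr (· ∘ ·) a = l.foldr (· ∘ ·) id ∘ a := by
  induction l with
  | nil => rfl
  | cons f t ih => rw [List.foldr_cons, ih]; rfl

lemma powSet_snoc {S : Set (X → X)} {w h : X → X} {n : ℕ}
    (hw : w ∈ powSet S n) (hh : h ∈ S) : w ∘ h ∈ powSet S (n + 1) := by
  obtain ⟨l, hlen, hmem, rfl⟩ := hw
  refine ⟨l ++ [h], by simp [hlen], ?_, ?_⟩
  · intro f hf
    rcases List.mem_append.mp hf with h1 | h1
    · exact hmem f h1
    · simp at h1; subst h1; exact hh
  · conv_rhs => rw [List.foldr_append, foldr_comp]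
    rfl

def altW (u v : X → X) : ℕ → (X → X)
  | 0 => id
  | n + 1 => altW u v n ∘ (if Even n then u else v)

lemma altW_isometry [MetricSpace X] {u v : X → X} (hu : Isometry u) (hv : Isometry v) :
    ∀ n, Isometry (altW u v n)
  | 0 => isometry_id
  | n + 1 => by
    refine (altW_isometry hu hv n).comp ?_
    by_cases h : Even n <;> simp [h, hu, hv]

lemma altW_mem {S : Set (X → X)} {u v : X → X} (huS : u ∈ S) (hvS : v ∈ S) :
    ∀ n, altW u v n ∈ powSet S n
  | 0 => ⟨[], rfl, by simp, rfl⟩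
  | n + 1 => powSet_snoc (altW_mem huS hvS n) (by split_ifs <;> assumption)


section Metric
variable [MetricSpace X] (x : X)

lemma dispSup_nonneg' (T : Set (X → X)) : 0 ≤ dispSup x T :=
  Real.sSup_nonneg (by rintro _ ⟨f, _, rfl⟩; exact dist_nonneg)

lemma powSet_disp_le {S : Set (X → X)} (hiso : ∀ f ∈ S, Isometry f)
    {C : ℝ} (hC : ∀ f ∈ S, dist (f x) x ≤ C) {n : ℕ} {w : X → X}
    (hw : w ∈ powSet S n) : dist (w x) x ≤ n * C := by
  obtain ⟨l, hlen, hmem, rfl⟩ := hw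
  subst hlen
  induction l with
  | nil => simp
  | cons f t ih =>
    have hf := hmem f (by simp)
    have ht : ∀ g ∈ t, g ∈ S := fun g hg => hmem g (by simp [hg])
    have e1 : (f :: t).foldr (· ∘ ·) id x = f (t.foldr (· ∘ ·) id x) := rfl
    have h2 : dist (f (t.foldr (· ∘ ·) id x)) x
        ≤ dist (f (t.foldr (· ∘ ·) id x)) (f x) + dist (f x) x := dist_triangle _ _ _
    rw [(hiso f hf).dist_eq] at h2
    have h3 := ih ht
    have h4 := hC f hf
    rw [e1]
    simp only [List.length_cons]
    push_cast
    push_cast at h3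
    linarith

lemma bddAbove_disp {S : Set (X → X)} (hiso : ∀ f ∈ S, Isometry f)
    {C : ℝ} (hC : ∀ f ∈ S, dist (f x) x ≤ C) (n : ℕ) :
    BddAbove ((fun f => dist (f x) x) '' powSet S n) := by
  refine ⟨n * C, ?_⟩
  rintro _ ⟨w, hw, rfl⟩
  exact powSet_disp_le x hiso hC hw

variable {u v : X → X} (hu : Isometry u) (hv : Isometry v)
include hu hv

lemma altW_one_step (n : ℕ) {E : ℝ} (hdu : dist (u x) x ≤ E) (hdv : dist (v x) x ≤ E) :
    dist (altW u v (n + 1) x) (altW u v n x) ≤ E := by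
  have h1 : altW u v (n + 1) x = altW u v n ((if Even n then u else v) x) := rfl
  rw [h1, (altW_isometry hu hv n).dist_eq]
  by_cases h : Even n <;> simp [h, hdu, hdv]

lemma altW_two_step (n : ℕ) {m : ℝ}
    (hm1 : m ≤ dist (u (v x)) x) (hm2 : m ≤ dist (v (u x)) x) :
    m ≤ dist (altW u v n x) (altW u v (n + 2) x) := by
  have h1 : altW u v (n + 2) x
      = altW u v n ((if Even n then u else v) ((if Even (n+1) then u else v) x)) := rfl
  rw [h1, (altW_isometry hu hv n).dist_eq]
  by_cases h : Even n
  · have h2 : ¬ Even (n + 1) := by simpa [Nat.even_add_one] using h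
    simpa [h, h2, dist_comm] using hm1
  · have h2 : Even (n + 1) := by simpa [Nat.even_add_one] using h
    simpa [h, h2, dist_comm] using hm2

lemma alt_chain {δ : ℝ} (hδ : 0 ≤ δ)
    (hfpc : ∀ a b c d : X, dist a b + dist c d ≤
      max (dist a c + dist b d) (dist a d + dist b c) + 2 * δ)
    {m E : ℝ} (hdu : dist (u x) x ≤ E) (hdv : dist (v x) x ≤ E)
    (hm1 : m ≤ dist (u (v x)) x) (hm2 : m ≤ dist (v (u x)) x)
    (hgap : E + 2 * δ < m) :
    ∀ n : ℕ, dist (altW u v (n + 1) x) x + (m - E - 2 * δ)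
      ≤ dist (altW u v (n + 2) x) x := by
  intro n
  induction n with
  | zero =>
    have h1 : altW u v 1 x = u x := rfl
    have h2 : altW u v 2 x = u (v x) := rfl
    rw [h1, h2]
    linarith
  | succ k ih =>
    have h4 := hfpc x (altW u v (k + 2) x) (altW u v (k + 1) x) (altW u v (k + 3) x)
    have htwo : m ≤ dist (altW u v (k + 1) x) (altW u v (k + 3) x) :=
      altW_two_step x hu hv (k + 1) hm1 hm2
    have hone1 : dist (altW u v (k + 2) x) (altW u v (k + 1) x) ≤ E :=
      altW_one_step x hu hv (k + 1) hdu hdv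
    have hone2 : dist (altW u v (k + 2) x) (altW u v (k + 3) x) ≤ E := by
      rw [dist_comm]; exact altW_one_step x hu hv (k + 2) hdu hdv
    have c1 : dist x (altW u v (k + 1) x) = dist (altW u v (k + 1) x) x := dist_comm _ _
    have c2 : dist x (altW u v (k + 2) x) = dist (altW u v (k + 2) x) x := dist_comm _ _
    have c3 : dist x (altW u v (k + 3) x) = dist (altW u v (k + 3) x) x := dist_comm _ _
    rcases le_total (dist x (altW u v (k + 1) x) + dist (altW u v (k + 2) x) (altW u v (k + 3) x))
        (dist x (altW u v (k + 3) x) + dist (altW u v (k + 2) x) (altW u v (k + 1) x)) with h | h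
    · rw [max_eq_right h] at h4
      linarith
    · rw [max_eq_left h] at h4
      linarith


lemma D_ge {δ : ℝ} (hδ : 0 ≤ δ)
    (hfpc : ∀ a b c d : X, dist a b + dist c d ≤
      max (dist a c + dist b d) (dist a d + dist b c) + 2 * δ)
    {S : Set (X → X)} (hiso : ∀ f ∈ S, Isometry f)
    {C : ℝ} (hC : ∀ f ∈ S, dist (f x) x ≤ C)
    (huS : u ∈ S) (hvS : v ∈ S)
    {m E : ℝ} (hdu : dist (u x) x ≤ E) (hdv : dist (v x) x ≤ E)
    (hm1 : m ≤ dist (u (v x)) x) (hm2 : m ≤ dist (v (u x)) x)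
    (hgap : E + 2 * δ < m) {D : ℝ}
    (hD : Tendsto (fun n : ℕ => dispSup x (powSet S n) / n) atTop (nhds D)) :
    m - E - 2 * δ ≤ D := by
  set G : ℝ := m - E - 2 * δ with hG
  have hchain := alt_chain x hu hv hδ hfpc hdu hdv hm1 hm2 hgap
  have hlow : ∀ n : ℕ, (n : ℝ) * G ≤ dist (altW u v (n + 1) x) x := by
    intro n
    induction n with
    | zero => simpa using dist_nonneg
    | succ k ih =>
      have := hchain k
      push_cast
      linarith
  have hub : ∀ n : ℕ, dist (altW u v (n + 1) x) x ≤ dispSup x (powSet S (n + 1)) := by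
    intro n
    exact le_csSup (bddAbove_disp x hiso hC (n + 1))
      (Set.mem_image_of_mem _ (altW_mem huS hvS (n + 1)))
  have hcomp : ∀ n : ℕ, (n : ℝ) * G / ((n : ℝ) + 1)
      ≤ dispSup x (powSet S (n + 1)) / ((n + 1 : ℕ) : ℝ) := by
    intro n
    have hpos : (0 : ℝ) < (n : ℝ) + 1 := by positivity
    have : ((n + 1 : ℕ) : ℝ) = (n : ℝ) + 1 := by push_cast; ring
    rw [this]
    have hnum : (n : ℝ) * G ≤ dispSup x (powSet S (n + 1)) := (hlow n).trans (hub n)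
    exact (div_le_div_iff_of_pos_right hpos).mpr hnum
  have hlim : Tendsto (fun n : ℕ => (n : ℝ) * G / ((n : ℝ) + 1)) atTop (nhds G) := by
    have h0 : Tendsto (fun n : ℕ => G / ((n : ℝ) + 1)) atTop (nhds 0) := by
      have := (tendsto_const_div_atTop_nhds_zero_nat G).comp (tendsto_add_atTop_nat 1)
      refine this.congr fun n => ?_
      simp [Function.comp]
    have h1 : Tendsto (fun n : ℕ => G - G / ((n : ℝ) + 1)) atTop (nhds (G - 0)) :=
      tendsto_const_nhds.sub h0
    rw [sub_zero] at h1
    refine h1.congr fun n => ?_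
    have hne : ((n : ℝ) + 1) ≠ 0 := by positivity
    field_simp
    ring
  have hDshift : Tendsto (fun n : ℕ => dispSup x (powSet S (n + 1)) / ((n + 1 : ℕ) : ℝ))
      atTop (nhds D) := hD.comp (tendsto_add_atTop_nat 1)
  exact le_of_tendsto_of_tendsto' hlim hDshift hcomp

end Metric

end Stmt7Aux

/-- In a `δ`-hyperbolic metric space, for any bounded set `Σ`
of isometries and any `x`: `|Σ²|ₓ ≤ |Σ|ₓ + D(Σ) + 6δ`, where
`D(Σ) = lim_n |Σⁿ|ₓ/n` is the joint stable length. -/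
theorem stmt7 {X : Type*} [MetricSpace X] (δ : ℝ) (hδ : 0 ≤ δ)
    (hfpc : ∀ x y s t : X, dist x y + dist s t ≤
      max (dist x s + dist y t) (dist x t + dist y s) + 2 * δ)
    (S : Set (X → X)) (hS : ∀ f ∈ S, Isometry f ∧ Function.Surjective f)
    (x : X) (hb : ∃ C : ℝ, ∀ f ∈ S, dist (f x) x ≤ C)
    (D : ℝ)
    (hD : Tendsto (fun n : ℕ => dispSup x (powSet S n) / n) atTop (nhds D)) :
    dispSup x (powSet S 2) ≤ dispSup x S + D + 6 * δ := by

  obtain ⟨C, hC⟩ := hb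
  have hiso : ∀ f ∈ S, Isometry f := fun f hf => (hS f hf).1
  have hLbdd : BddAbove ((fun f => dist (f x) x) '' S) :=
    ⟨C, by rintro _ ⟨f, hf, rfl⟩; exact hC f hf⟩
  have hD0 : 0 ≤ D := ge_of_tendsto' hD fun n =>
    div_nonneg (Stmt7Aux.dispSup_nonneg' x _) (Nat.cast_nonneg n)
  have hL0 : 0 ≤ dispSup x S := Stmt7Aux.dispSup_nonneg' x S
  refine Real.sSup_le ?_ (by linarith)
  rintro _ ⟨w, ⟨l, hlen, hmem, rfl⟩, rfl⟩
  obtain ⟨f, g, rfl⟩ := List.length_eq_two.mp hlen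
  have hfS : f ∈ S := hmem f (by simp)
  have hgS : g ∈ S := hmem g (by simp)
  have hfI : Isometry f := (hS f hfS).1
  have hgI : Isometry g := (hS g hgS).1
  show dist (f (g x)) x ≤ dispSup x S + D + 6 * δ
  set L := dispSup x S with hLdef
  have hfL : dist (f x) x ≤ L := le_csSup hLbdd (Set.mem_image_of_mem _ hfS)
  have hgL : dist (g x) x ≤ L := le_csSup hLbdd (Set.mem_image_of_mem _ hgS)
  set M := dist (f (g x)) x with hM
  by_cases hMle : M ≤ L + 6 * δ
  · linarith
  push_neg at hMle
  obtain ⟨vf, hvf⟩ := (hS f hfS).2 x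
  obtain ⟨vg, hvg⟩ := (hS g hgS).2 x
  have e1 : dist (g x) vf = M := by
    rw [hM]
    calc dist (g x) vf = dist (f (g x)) (f vf) := (hfI.dist_eq _ _).symm
    _ = dist (f (g x)) x := by rw [hvf]
  have e2 : dist vg x = dist (g x) x := by
    calc dist vg x = dist (g vg) (g x) := (hgI.dist_eq _ _).symm
    _ = dist x (g x) := by rw [hvg]
    _ = dist (g x) x := dist_comm _ _
  have e3 : dist (g x) vg = dist (g (g x)) x := by
    calc dist (g x) vg = dist (g (g x)) (g vg) := (hgI.dist_eq _ _).symm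
    _ = dist (g (g x)) x := by rw [hvg]
  have e4 : dist vf x = dist (f x) x := by
    calc dist vf x = dist (f vf) (f x) := (hfI.dist_eq _ _).symm
    _ = dist x (f x) := by rw [hvf]
    _ = dist (f x) x := dist_comm _ _
  have e5 : dist vg vf = dist vf vg := dist_comm _ _
  have e6 : dist vg (f x) = dist (g (f x)) x := by
    calc dist vg (f x) = dist (g vg) (g (f x)) := (hgI.dist_eq _ _).symm
    _ = dist x (g (f x)) := by rw [hvg]
    _ = dist (g (f x)) x := dist_comm _ _
  have e7 : dist vf (f x) = dist (f (f x)) x := by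
    calc dist vf (f x) = dist (f vf) (f (f x)) := (hfI.dist_eq _ _).symm
    _ = dist x (f (f x)) := by rw [hvf]
    _ = dist (f (f x)) x := dist_comm _ _
  have I1 := hfpc (g x) vf vg x
  rw [e1, e2, e3, e4] at I1
  have I2 := hfpc vg vf (f x) x
  rw [e5, e6, e7, e2, e4] at I2
  rcases le_total (dist (g (g x)) x + dist (f x) x) (dist (g x) x + dist vf vg) with h1 | h1
  · rw [max_eq_right h1] at I1
    rcases le_total (dist (g (f x)) x + dist (f x) x) (dist (g x) x + dist (f (f x)) x) with h2 | h2
    · rw [max_eq_right h2] at I2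
      have key : (M + dist (f x) x - dist (g x) x - 4 * δ) - dist (f x) x - 2 * δ ≤ D := by
        refine Stmt7Aux.D_ge x hfI hfI hδ hfpc hiso hC hfS hfS le_rfl le_rfl ?_ ?_ ?_ hD
        · linarith
        · linarith
        · linarith
      linarith
    · rw [max_eq_left h2] at I2
      have key : (M - 4 * δ) - L - 2 * δ ≤ D := by
        refine Stmt7Aux.D_ge x hfI hgI hδ hfpc hiso hC hfS hgS hfL hgL ?_ ?_ ?_ hD
        · linarith
        · linarith
        · linarith
      linarith
  · rw [max_eq_left h1] at I1
    have key : (M + dist (g x) x - dist (f x) x - 4 * δ) - dist (g x) x - 2 * δ ≤ D := by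
      refine Stmt7Aux.D_ge x hgI hgI hδ hfpc hiso hC hgS hgS le_rfl le_rfl ?_ ?_ ?_ hD
      · linarith
      · linarith
      · linarith
    linarith
end

section
/- For every matrix A in SL₂±(ℝ) (i.e., det A = ±1), the hyperbolic distance in the upper half-plane from the associated Möbius transformation applied to i back to i satisfies d_{ℍ²}(Ã·i, i) = 2·log‖A‖₂, where ‖·‖₂ is the Euclidean operator norm. -/
/-!
Write `A = !![a, b; c, d]` and `F = a² + b² + c² + d²`. On the hyperbolic side
`Ã·i = ((ac + bd) + i) / (c² + d²)` in both cases `det A = ±1`, and the formula for the `cosh` of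
the distance together with Lagrange's identity `(ac + bd)² + (ad - bc)² = (a² + b²)(c² + d²)`
gives `cosh d(Ã·i, i) = F / 2`. On the other side `μ = ‖A‖₂²` is the larger eigenvalue of `AᵀA`,
a matrix of trace `F` and determinant `(det A)² = 1`, so `μ + μ⁻¹ = F` and
`cosh (2 log ‖A‖₂) = cosh (log μ) = F / 2` as well. Both arguments of `cosh` are nonnegative
(`μ ≥ |det A| = 1`), and `cosh` is injective on `[0, ∞)`.
-/

open Complex Matrix UpperHalfPlane

lemma im_moebius_aux (a b c d : ℝ) (z : ℂ) (hz : z.im ≠ 0) (hdet : a * d - b * c ≠ 0) :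
    (((a : ℂ) * z + b) / ((c : ℂ) * z + d)).im
      = (a * d - b * c) * z.im / Complex.normSq ((c : ℂ) * z + d) := by
  have hden : ((c : ℂ) * z + d) ≠ 0 := by
    intro h
    have him : c * z.im = 0 := by
      have := congrArg Complex.im h
      simpa using this
    have hc : c = 0 := by
      rcases mul_eq_zero.1 him with h' | h'
      · exact h'
      · exact absurd h' hz
    have hre : c * z.re + d = 0 := by
      have := congrArg Complex.re h
      simpa using this
    have hd : d = 0 := by simpa [hc] using hre
    exact hdet (by simp [hc, hd])
  rw [Complex.div_im]
  have hnsq : Complex.normSq ((c : ℂ) * z + d) ≠ 0 := by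
    simpa [Complex.normSq_eq_zero] using hden
  rw [← sub_div]
  congr 1
  simp only [Complex.add_re, Complex.add_im, Complex.mul_re, Complex.mul_im,
    Complex.ofReal_re, Complex.ofReal_im]
  ring

lemma im_moebius_pos (a b c d : ℝ) (z : ℂ) (hz : z.im ≠ 0)
    (hdet : 0 < (a * d - b * c) * z.im) :
    0 < (((a : ℂ) * z + b) / ((c : ℂ) * z + d)).im := by
  have hdet' : a * d - b * c ≠ 0 := by
    intro h; rw [h] at hdet; simp at hdet
  rw [im_moebius_aux a b c d z hz hdet']
  have hden : ((c : ℂ) * z + d) ≠ 0 := by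
    intro h
    have him : c * z.im = 0 := by
      have := congrArg Complex.im h
      simpa using this
    have hc : c = 0 := by
      rcases mul_eq_zero.1 him with h' | h'
      · exact h'
      · exact absurd h' hz
    have hre : c * z.re + d = 0 := by
      have := congrArg Complex.re h
      simpa using this
    have hd : d = 0 := by simpa [hc] using hre
    exact hdet' (by simp [hc, hd])
  have : 0 < Complex.normSq ((c : ℂ) * z + d) := Complex.normSq_pos.2 hden
  positivity

/-- The (anti-)Möbius action of a matrix with determinant `±1` on `ℂ`:
`z ↦ (az+b)/(cz+d)` if `det = 1`, and `z ↦ (az̄+b)/(cz̄+d)` otherwise. -/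
noncomputable def moebiusMap (A : Matrix (Fin 2) (Fin 2) ℝ) (z : ℂ) : ℂ :=
  if A.det = 1 then
    ((A 0 0 : ℂ) * z + A 0 1) / ((A 1 0 : ℂ) * z + A 1 1)
  else
    ((A 0 0 : ℂ) * (starRingEnd ℂ z) + A 0 1) / ((A 1 0 : ℂ) * (starRingEnd ℂ z) + A 1 1)

lemma moebiusMap_im_pos (A : Matrix (Fin 2) (Fin 2) ℝ)
    (hA : A.det = 1 ∨ A.det = -1) (z : ℍ) : 0 < (moebiusMap A (z : ℂ)).im := by
  have hdet2 : A.det = A 0 0 * A 1 1 - A 0 1 * A 1 0 := Matrix.det_fin_two A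
  by_cases hd : A.det = 1
  · rw [moebiusMap, if_pos hd]
    apply im_moebius_pos _ _ _ _ _ (ne_of_gt z.2)
    rw [← hdet2, hd]
    simpa using z.2
  · rw [moebiusMap, if_neg hd]
    have hdm : A.det = -1 := hA.resolve_left hd
    have hzc : ((starRingEnd ℂ) (z : ℂ)).im = -(z : ℂ).im := by simp
    apply im_moebius_pos
    · rw [hzc]; simpa using ne_of_gt z.2
    · rw [hzc, ← hdet2, hdm]; simpa using z.2

/-- The isometry of the hyperbolic plane `ℍ` induced by a matrix of
determinant `±1` (for other matrices we take the identity as junk value). -/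
noncomputable def moebius (A : Matrix (Fin 2) (Fin 2) ℝ) (z : ℍ) : ℍ :=
  if h : A.det = 1 ∨ A.det = -1 then ⟨moebiusMap A (z : ℂ), moebiusMap_im_pos A h z⟩
  else z

/-- The Euclidean operator norm of a `2 × 2` real matrix. -/
noncomputable def l2OpNorm (A : Matrix (Fin 2) (Fin 2) ℝ) : ℝ :=
  ‖Matrix.toEuclideanCLM (𝕜 := ℝ) A‖

/-- The spectral radius of a real matrix (computed over `ℂ`, so that complex
eigenvalues are taken into account). -/
noncomputable def specRad (A : Matrix (Fin 2) (Fin 2) ℝ) : ℝ :=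
  (spectralRadius ℂ (A.map (algebraMap ℝ ℂ))).toReal

/-- The larger eigenvalue of the symmetric matrix `!![p, q; q, r]`. -/
noncomputable def topEigenvalue (p q r : ℝ) : ℝ :=
  (p + r + √((p - r) ^ 2 + 4 * q ^ 2)) / 2

section TopEigenvalue

variable (p q r : ℝ)

lemma left_le_topEigenvalue : p ≤ topEigenvalue p q r := by
  have := Real.abs_le_sqrt (le_add_of_nonneg_right (by positivity) :
    (p - r) ^ 2 ≤ (p - r) ^ 2 + 4 * q ^ 2)
  unfold topEigenvalue
  linarith [le_abs_self (p - r)]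

lemma right_le_topEigenvalue : r ≤ topEigenvalue p q r := by
  have := Real.abs_le_sqrt (le_add_of_nonneg_right (by positivity) :
    (p - r) ^ 2 ≤ (p - r) ^ 2 + 4 * q ^ 2)
  unfold topEigenvalue
  linarith [neg_abs_le (p - r)]

lemma topEigenvalue_sub_mul_sub :
    (topEigenvalue p q r - p) * (topEigenvalue p q r - r) = q ^ 2 := by
  have := Real.sq_sqrt (by positivity : 0 ≤ (p - r) ^ 2 + 4 * q ^ 2)
  unfold topEigenvalue
  linear_combination this / 4

lemma quadForm_le_topEigenvalue_mul (x y : ℝ) :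
    p * x ^ 2 + 2 * q * x * y + r * y ^ 2 ≤ topEigenvalue p q r * (x ^ 2 + y ^ 2) := by
  have hp := left_le_topEigenvalue p q r
  have hr := right_le_topEigenvalue p q r
  have hpr := topEigenvalue_sub_mul_sub p q r
  set μ := topEigenvalue p q r
  suffices 0 ≤ (μ - p) * x ^ 2 - 2 * q * x * y + (μ - r) * y ^ 2 by linarith
  rcases (sub_nonneg.2 hp).eq_or_lt with hp' | hp'
  · have hq : q = 0 := by nlinarith
    rw [← hp', hq]
    nlinarith
  · nlinarith [sq_nonneg ((μ - p) * x - q * y), mul_pos hp' hp']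

lemma exists_quadForm_eq_topEigenvalue_mul : ∃ x y : ℝ, x ^ 2 + y ^ 2 ≠ 0 ∧
    p * x ^ 2 + 2 * q * x * y + r * y ^ 2 = topEigenvalue p q r * (x ^ 2 + y ^ 2) := by
  have hpr := topEigenvalue_sub_mul_sub p q r
  set μ := topEigenvalue p q r
  by_cases hq : q = 0
  · rw [hq, zero_pow two_ne_zero, mul_eq_zero] at hpr
    rcases hpr with h | h
    · exact ⟨1, 0, by norm_num, by linear_combination -h⟩
    · exact ⟨0, 1, by norm_num, by linear_combination -h⟩
  · exact ⟨q, μ - p, by positivity, by linear_combination (p - μ) * hpr⟩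

end TopEigenvalue

lemma ContinuousLinearMap.sq_opNorm_eq_of_attained {𝕜 E F : Type*} [NontriviallyNormedField 𝕜]
    [NormedAddCommGroup E] [NormedSpace 𝕜 E] [NormedAddCommGroup F] [NormedSpace 𝕜 F]
    (f : E →L[𝕜] F) {μ : ℝ} (hle : ∀ v, ‖f v‖ ^ 2 ≤ μ * ‖v‖ ^ 2) {v : E} (hv : v ≠ 0)
    (heq : ‖f v‖ ^ 2 = μ * ‖v‖ ^ 2) : ‖f‖ ^ 2 = μ := by
  have hv' : 0 < ‖v‖ := norm_pos_iff.2 hv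
  have hμ : 0 ≤ μ := nonneg_of_mul_nonneg_left (heq ▸ sq_nonneg _) (by positivity)
  have hfv : ‖f v‖ = √μ * ‖v‖ := by
    rw [← Real.sqrt_sq (norm_nonneg _), heq, Real.sqrt_mul hμ, Real.sqrt_sq hv'.le]
  suffices ‖f‖ = √μ by rw [this, Real.sq_sqrt hμ]
  refine f.opNorm_eq_of_bounds (Real.sqrt_nonneg μ) (fun w ↦ ?_) fun N _ hN ↦ ?_
  · rw [← Real.sqrt_sq (norm_nonneg w), ← Real.sqrt_mul hμ]
    exact Real.le_sqrt_of_sq_le (hle w)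
  · exact le_of_mul_le_mul_right (hfv ▸ hN v) hv'

lemma sq_norm_toEuclideanCLM_apply (A : Matrix (Fin 2) (Fin 2) ℝ) (v : EuclideanSpace ℝ (Fin 2)) :
    ‖Matrix.toEuclideanCLM (𝕜 := ℝ) A v‖ ^ 2 =
      (A 0 0 ^ 2 + A 1 0 ^ 2) * v 0 ^ 2 + 2 * (A 0 0 * A 0 1 + A 1 0 * A 1 1) * v 0 * v 1
        + (A 0 1 ^ 2 + A 1 1 ^ 2) * v 1 ^ 2 := by
  rw [EuclideanSpace.norm_sq_eq]
  change ∑ i, ‖(A *ᵥ v) i‖ ^ 2 = _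
  simp only [Real.norm_eq_abs, sq_abs, Fin.sum_univ_two, Matrix.mulVec, dotProduct]
  ring

lemma l2OpNorm_sq (A : Matrix (Fin 2) (Fin 2) ℝ) :
    l2OpNorm A ^ 2 = topEigenvalue (A 0 0 ^ 2 + A 1 0 ^ 2) (A 0 0 * A 0 1 + A 1 0 * A 1 1)
      (A 0 1 ^ 2 + A 1 1 ^ 2) := by
  have hnorm (v : EuclideanSpace ℝ (Fin 2)) : ‖v‖ ^ 2 = v 0 ^ 2 + v 1 ^ 2 := by
    simp [EuclideanSpace.norm_sq_eq, Fin.sum_univ_two]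
  obtain ⟨x, y, hxy, heq⟩ := exists_quadForm_eq_topEigenvalue_mul (A 0 0 ^ 2 + A 1 0 ^ 2)
    (A 0 0 * A 0 1 + A 1 0 * A 1 1) (A 0 1 ^ 2 + A 1 1 ^ 2)
  refine (Matrix.toEuclideanCLM (𝕜 := ℝ) A).sq_opNorm_eq_of_attained (fun w ↦ ?_)
    (v := !₂[x, y]) ?_ ?_
  · rw [sq_norm_toEuclideanCLM_apply, hnorm]
    exact quadForm_le_topEigenvalue_mul _ _ _ _ _
  · intro h
    have h0 := congrArg (· 0) h
    have h1 := congrArg (· 1) h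
    simp_all
  · rw [sq_norm_toEuclideanCLM_apply, hnorm]
    simpa using heq

lemma gram_det_eq_det_sq (A : Matrix (Fin 2) (Fin 2) ℝ) :
    (A 0 0 ^ 2 + A 1 0 ^ 2) * (A 0 1 ^ 2 + A 1 1 ^ 2) - (A 0 0 * A 0 1 + A 1 0 * A 1 1) ^ 2
      = A.det ^ 2 := by
  rw [Matrix.det_fin_two]
  ring

lemma l2OpNorm_sq_sq_sub (A : Matrix (Fin 2) (Fin 2) ℝ) :
    (l2OpNorm A ^ 2) ^ 2 - (A 0 0 ^ 2 + A 0 1 ^ 2 + A 1 0 ^ 2 + A 1 1 ^ 2) * l2OpNorm A ^ 2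
      + A.det ^ 2 = 0 := by
  rw [l2OpNorm_sq, ← gram_det_eq_det_sq]
  linear_combination topEigenvalue_sub_mul_sub (A 0 0 ^ 2 + A 1 0 ^ 2)
    (A 0 0 * A 0 1 + A 1 0 * A 1 1) (A 0 1 ^ 2 + A 1 1 ^ 2)

lemma abs_det_le_l2OpNorm_sq (A : Matrix (Fin 2) (Fin 2) ℝ) : |A.det| ≤ l2OpNorm A ^ 2 := by
  have hp := left_le_topEigenvalue (A 0 0 ^ 2 + A 1 0 ^ 2) (A 0 0 * A 0 1 + A 1 0 * A 1 1)
      (A 0 1 ^ 2 + A 1 1 ^ 2)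
  have hr := right_le_topEigenvalue (A 0 0 ^ 2 + A 1 0 ^ 2) (A 0 0 * A 0 1 + A 1 0 * A 1 1)
      (A 0 1 ^ 2 + A 1 1 ^ 2)
  have hdet := gram_det_eq_det_sq A
  rw [← l2OpNorm_sq] at hp hr
  refine abs_le.2 (abs_le_of_sq_le_sq' ?_ (by positivity))
  nlinarith [mul_le_mul hp hr (by positivity) (by positivity)]


lemma moebius_div_eq_of_det_eq {a b c d s : ℝ} (hdet : a * d - b * c = s) (hs : s ^ 2 = 1) :
    ((a : ℂ) * (s * Complex.I) + b) / ((c : ℂ) * (s * Complex.I) + d)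
      = (((a * c + b * d : ℝ) : ℂ) + Complex.I) / ((c ^ 2 + d ^ 2 : ℝ) : ℂ) := by
  have hcd : c ^ 2 + d ^ 2 ≠ 0 := by
    intro h
    have hc : c = 0 := by nlinarith
    have hd : d = 0 := by nlinarith
    simp [hc, hd, ← hdet] at hs
  have hden : (c : ℂ) * (s * Complex.I) + d ≠ 0 := by
    intro h
    apply hcd
    have h' := congrArg normSq h
    simp only [normSq_apply, add_re, add_im, mul_re, mul_im, ofReal_re, ofReal_im, Complex.I_re,
      Complex.I_im, map_zero] at h'
    nlinarith
  have hdetC : (a : ℂ) * d - b * c = s := by exact_mod_cast hdet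
  have hsC : (s : ℂ) ^ 2 = 1 := by exact_mod_cast hs
  rw [div_eq_div_iff hden (by exact_mod_cast hcd)]
  push_cast
  linear_combination ((s : ℂ) * Complex.I * d - c) * hdetC + d * Complex.I * hsC
    - c * s * Complex.I_sq

lemma coe_moebius_I {A : Matrix (Fin 2) (Fin 2) ℝ} (hA : A.det = 1 ∨ A.det = -1) :
    (moebius A UpperHalfPlane.I : ℂ)
      = (((A 0 0 * A 1 0 + A 0 1 * A 1 1 : ℝ) : ℂ) + Complex.I)
        / ((A 1 0 ^ 2 + A 1 1 ^ 2 : ℝ) : ℂ) := by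
  rw [moebius, dif_pos hA]
  change moebiusMap A Complex.I = _
  rw [moebiusMap]
  rcases hA with h | h
  · rw [if_pos h]
    simpa using moebius_div_eq_of_det_eq ((Matrix.det_fin_two A).symm.trans h) (one_pow 2)
  · rw [if_neg (by norm_num [h]), Complex.conj_I]
    simpa using moebius_div_eq_of_det_eq ((Matrix.det_fin_two A).symm.trans h) (by norm_num)

lemma cosh_dist_moebius_I {A : Matrix (Fin 2) (Fin 2) ℝ} (hA : A.det = 1 ∨ A.det = -1) :
    Real.cosh (dist (moebius A UpperHalfPlane.I) UpperHalfPlane.I)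
      = (A 0 0 ^ 2 + A 0 1 ^ 2 + A 1 0 ^ 2 + A 1 1 ^ 2) / 2 := by
  have hz := coe_moebius_I hA
  have hdet : A.det ^ 2 = 1 := by rcases hA with h | h <;> simp [h]
  rw [Matrix.det_fin_two] at hdet
  have hre : (moebius A UpperHalfPlane.I).re
      = (A 0 0 * A 1 0 + A 0 1 * A 1 1) / (A 1 0 ^ 2 + A 1 1 ^ 2) := by
    rw [← UpperHalfPlane.coe_re, hz, Complex.div_ofReal_re]
    simp
  have him : (moebius A UpperHalfPlane.I).im = 1 / (A 1 0 ^ 2 + A 1 1 ^ 2) := by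
    rw [← UpperHalfPlane.coe_im, hz, Complex.div_ofReal_im]
    simp
  have hn : A 1 0 ^ 2 + A 1 1 ^ 2 ≠ 0 := fun h ↦ by
    simpa [h] using (moebius A UpperHalfPlane.I).im_pos.trans_eq him
  rw [UpperHalfPlane.cosh_dist', hre, him, UpperHalfPlane.I_re, UpperHalfPlane.I_im]
  field_simp
  linear_combination -hdet

lemma one_le_l2OpNorm {A : Matrix (Fin 2) (Fin 2) ℝ} (hA : A.det ^ 2 = 1) : 1 ≤ l2OpNorm A := by
  have h := abs_det_le_l2OpNorm_sq A
  rw [(pow_eq_one_iff_of_nonneg (abs_nonneg _) two_ne_zero).1 ((sq_abs _).trans hA)] at h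
  have hN : 0 ≤ l2OpNorm A := ContinuousLinearMap.opNorm_nonneg _
  rwa [one_le_sq_iff_one_le_abs, abs_of_nonneg hN] at h

lemma cosh_two_mul_log_l2OpNorm {A : Matrix (Fin 2) (Fin 2) ℝ} (hA : A.det ^ 2 = 1) :
    Real.cosh (2 * Real.log (l2OpNorm A))
      = (A 0 0 ^ 2 + A 0 1 ^ 2 + A 1 0 ^ 2 + A 1 1 ^ 2) / 2 := by
  have hlog : 2 * Real.log (l2OpNorm A) = Real.log (l2OpNorm A ^ 2) := by
    rw [Real.log_pow]
    norm_num
  have hquad := l2OpNorm_sq_sq_sub A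
  have hμ : 0 < l2OpNorm A ^ 2 := by nlinarith [one_le_l2OpNorm hA]
  rw [hlog]
  generalize l2OpNorm A ^ 2 = μ at hquad hμ ⊢
  rw [Real.cosh_log hμ]
  field_simp
  linear_combination hquad - hA

/-- For `A ∈ SL₂±(ℝ)`, `d_{ℍ²}(Ã·i, i) = 2 log ‖A‖₂`. -/
theorem stmt12 (A : Matrix (Fin 2) (Fin 2) ℝ) (hA : A.det = 1 ∨ A.det = -1) :
    dist (moebius A UpperHalfPlane.I) UpperHalfPlane.I = 2 * Real.log (l2OpNorm A) := by
  have hdet : A.det ^ 2 = 1 := by rcases hA with h | h <;> simp [h]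
  refine Real.cosh_injOn dist_nonneg ?_ ?_
  · exact mul_nonneg zero_le_two (Real.log_nonneg (one_le_l2OpNorm hdet))
  · rw [cosh_dist_moebius_I hA, cosh_two_mul_log_l2OpNorm hdet]
end

section
/- The Euclidean plane does not satisfy the Bochi-type displacement inequality: for every integer d ≥ 2 and every constant C > 0, there exists a bounded set Σ of isometries of ℝ² and a point x such that |Σ^d|_x > (d−1)|Σ|_x + D(Σ) + C. -/
open Filter Topology Function

/-- The joint stable length `D(S) = inf_{n ≥ 1} |Sⁿ|ₓ / n`
(which equals `lim_n |Sⁿ|ₓ / n` by Fekete's lemma). -/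
noncomputable def jointStable {X : Type*} [MetricSpace X] (S : Set (X → X)) (x : X) : ℝ :=
  ⨅ n : ℕ, dispSup x (powSet S (n + 1)) / (n + 1)

/-!
Take `Σ = {f}` with `f` the rotation about `0` by the angle `2 / d²`, and `x = C d²` on the real
axis. The orbit of `x` is bounded, so `D(Σ) ≤ 0`. The chords `|fᵏ x - x| = 2 |x| sin (k / d²)`
grow almost linearly in `k` for `k ≤ d`, so `|Σᵈ|ₓ - (d - 1) |Σ|ₓ` is about `|Σ|ₓ ≈ 2 |x| / d²`;
precisely, `sin (1 / d) - (d - 1) sin (1 / d²) > 1 / (2 d²)`, which gives the margin `C`.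
-/

open Real

lemma foldr_comp_eq_iterate {X : Type*} {f : X → X} :
    ∀ l : List (X → X), (∀ g ∈ l, g = f) → l.foldr (· ∘ ·) id = f^[l.length]
  | [], _ => rfl
  | g :: l, h => by
    rw [List.foldr_cons, List.length_cons, iterate_succ',
      foldr_comp_eq_iterate l fun g' hg' => h g' (List.mem_cons_of_mem _ hg'), h g List.mem_cons_self]

lemma powSet_singleton {X : Type*} (f : X → X) (n : ℕ) : powSet {f} n = {f^[n]} := by
  ext g
  simp only [powSet, Set.mem_ofPred_eq, Set.mem_singleton_iff]
  constructor
  · rintro ⟨l, rfl, hl, rfl⟩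
    exact foldr_comp_eq_iterate l hl
  · rintro rfl
    refine ⟨List.replicate n f, List.length_replicate, fun g => List.eq_of_mem_replicate, ?_⟩
    rw [foldr_comp_eq_iterate _ fun g => List.eq_of_mem_replicate, List.length_replicate]

section Displacement

variable {X : Type*} [MetricSpace X]

lemma dispSup_singleton (x : X) (f : X → X) : dispSup x {f} = dist (f x) x := by
  rw [dispSup, Set.image_singleton, csSup_singleton]

lemma dispSup_nonneg (x : X) (S : Set (X → X)) : 0 ≤ dispSup x S :=
  Real.sSup_nonneg <| by rintro _ ⟨f, -, rfl⟩; exact dist_nonneg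

lemma jointStable_nonpos_of_forall_dispSup_le {S : Set (X → X)} {x : X} {M : ℝ}
    (hM : ∀ n, dispSup x (powSet S n) ≤ M) : jointStable S x ≤ 0 := by
  have hbdd : BddBelow (Set.range fun n : ℕ => dispSup x (powSet S (n + 1)) / (n + 1)) :=
    ⟨0, by rintro _ ⟨n, rfl⟩; exact div_nonneg (dispSup_nonneg x _) n.cast_add_one_pos.le⟩
  have hle : ∀ n : ℕ, jointStable S x ≤ M * (1 / ((n : ℝ) + 1)) := fun n =>
    (ciInf_le hbdd n).trans <| by
      rw [mul_one_div]; exact div_le_div_of_nonneg_right (hM _) n.cast_add_one_pos.le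
  simpa using ge_of_tendsto' (tendsto_one_div_add_atTop_nhds_zero_nat.const_mul M) hle

end Displacement

lemma iterate_rotation (a : Circle) (n : ℕ) : (⇑(rotation a))^[n] = ⇑(rotation (a ^ n)) := by
  induction n with
  | zero => funext z; simp
  | succ n ih => funext z; rw [iterate_succ', comp_apply, ih]; simp [pow_succ']

lemma dist_rotation_exp_self (θ : ℝ) (z : ℂ) :
    dist (rotation (Circle.exp θ) z) z = 2 * |sin (θ / 2)| * ‖z‖ := by
  rw [rotation_apply, dist_eq_norm, ← sub_one_mul, norm_mul, Circle.coe_exp, mul_comm (θ : ℂ),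
    Complex.norm_exp_I_mul_ofReal_sub_one, norm_mul, Real.norm_two, Real.norm_eq_abs]

lemma sub_one_mul_sin_inv_sq_add_lt_sin_inv {d : ℝ} (hd : 1 ≤ d) :
    (d - 1) * |sin (1 / d ^ 2)| + 1 / (2 * d ^ 2) < sin (1 / d) := by
  have hd0 : 0 < d := one_pos.trans_le hd
  have hsmall : |sin (1 / d ^ 2)| ≤ 1 / d ^ 2 :=
    abs_sin_le_abs.trans_eq (abs_of_pos (by positivity))
  have hlarge : 1 / d - (1 / d) ^ 3 / 6 < sin (1 / d) := sin_gt_sub_cube (by positivity)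
  have hgap : (d - 1) * (1 / d ^ 2) + 1 / (2 * d ^ 2) ≤ 1 / d - (1 / d) ^ 3 / 6 := by
    have key : 1 / d - (1 / d) ^ 3 / 6 - ((d - 1) * (1 / d ^ 2) + 1 / (2 * d ^ 2))
        = (3 * d - 1) / (6 * d ^ 3) := by field_simp; ring
    have : 0 ≤ (3 * d - 1) / (6 * d ^ 3) := div_nonneg (by linarith) (by positivity)
    linarith
  calc (d - 1) * |sin (1 / d ^ 2)| + 1 / (2 * d ^ 2)
      ≤ (d - 1) * (1 / d ^ 2) + 1 / (2 * d ^ 2) := by gcongr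
    _ < sin (1 / d) := hgap.trans_lt hlarge

/-- The Euclidean plane (identified with `ℂ`) does not
satisfy the Bochi-type displacement inequality: for every `d ≥ 2` and `C > 0`
there are a bounded set `Σ` of isometries of `ℂ` and a point `x` with
`|Σ^d|ₓ > (d−1)|Σ|ₓ + D(Σ) + C`. -/
theorem stmt16 :
    ∀ d : ℕ, 2 ≤ d → ∀ C : ℝ, 0 < C →
      ∃ (S : Set (ℂ → ℂ)) (x : ℂ),
        (∀ f ∈ S, Isometry f ∧ Function.Surjective f) ∧
        (∃ M : ℝ, ∀ f ∈ S, dist (f x) x ≤ M) ∧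
        ((d : ℝ) - 1) * dispSup x S + jointStable S x + C < dispSup x (powSet S d) := by
  intro d hd C hC
  have hd1 : (1 : ℝ) ≤ d := by exact_mod_cast one_le_two.trans hd
  set f : ℂ → ℂ := ⇑(rotation (Circle.exp (2 / d ^ 2)))
  set R : ℝ := C * d ^ 2
  have hR : ‖(R : ℂ)‖ = R := by rw [Complex.norm_real, Real.norm_of_nonneg (by positivity)]
  have hdisp (n : ℕ) : dispSup (R : ℂ) (powSet {f} n) = 2 * |sin (n / d ^ 2)| * R := by
    rw [powSet_singleton, dispSup_singleton, iterate_rotation, ← Circle.exp_natCast_mul,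
      dist_rotation_exp_self, hR]
    ring_nf
  refine ⟨{f}, (R : ℂ), ?_, ⟨dist (f R) R, by rintro g rfl; rfl⟩, ?_⟩
  · rintro g rfl
    exact ⟨(rotation _).isometry, (rotation _).surjective⟩
  have hstable : jointStable {f} (R : ℂ) ≤ 0 :=
    jointStable_nonpos_of_forall_dispSup_le (M := 2 * R) fun n => by
      rw [hdisp]; gcongr; exact (mul_le_iff_le_one_right two_pos).2 (abs_sin_le_one _)
  have hS : dispSup (R : ℂ) {f} = 2 * |sin (1 / d ^ 2)| * R := by
    simpa [powSet_singleton] using hdisp 1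
  have hSd : dispSup (R : ℂ) (powSet {f} d) = 2 * |sin (1 / d)| * R := by
    rw [hdisp, pow_two, div_mul_cancel_right₀ (by positivity), one_div]
  have hgap := mul_lt_mul_of_pos_left (sub_one_mul_sin_inv_sq_add_lt_sin_inv hd1)
    (show 0 < 2 * R by positivity)
  have hRC : 2 * R * (1 / (2 * d ^ 2)) = C := by simp only [R]; field_simp
  have hsin : 2 * R * sin (1 / d) ≤ 2 * |sin (1 / d)| * R := by
    rw [mul_right_comm]; gcongr; exact le_abs_self _
  rw [hS, hSd]
  linarith
end

section
/- Let X be a δ-hyperbolic metric space. On the isometry group of X with the topology of pointwise convergence, the stable length f ↦ d∞(f) is continuous: it is both the infimum over n ≥ 1 of the continuous functions f ↦ d(fⁿx,x)/n (upper semicontinuity) and the supremum over n ≥ 1 of the continuous functions f ↦ (d(f^{2n}x,x) − d(fⁿx,x) − 2δ)/n (lower semicontinuity), for any fixed x ∈ X. -/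
open Filter Topology Function

/-- The stable length `d∞(f) = inf_{n ≥ 1} d(fⁿx, x)/n`
(which equals `lim_n d(fⁿx, x)/n` by Fekete's lemma). -/
noncomputable def stableLen {X : Type*} [MetricSpace X] (f : X → X) (x : X) : ℝ :=
  ⨅ n : ℕ, dist (f^[n + 1] x) x / (n + 1)

/-!
Upper semicontinuity of `d∞` is formal: it is an infimum of continuous functions of `f`.
For lower semicontinuity, let `bₖ = d(gᵏx, x)` for an isometry `g`. The four point condition
for `x, g²x, gx, gᵏ⁺²x` gives `bₖ₊₁ + c ≤ max bₖ bₖ₊₂` with `c = b₂ - b₁ - 2δ`, so if `c > 0`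
the sequence `bₖ` grows by at least `c` at each step and `c ≤ d∞(g)`. Applied to `g = fⁿ`,
whose stable length is `n d∞(f)`, this bounds each `(d(f²ⁿx, x) - d(fⁿx, x) - 2δ)/n` by `d∞(f)`,
and these quotients tend to `2 d∞(f) - d∞(f) = d∞(f)`. Hence `d∞` is also a supremum of
continuous functions of `f`.
-/

def IsFourPointHyperbolic (X : Type*) [PseudoMetricSpace X] (δ : ℝ) : Prop :=
  ∀ x y s t : X, dist x y + dist s t ≤ max (dist x s + dist y t) (dist x t + dist y s) + 2 * δ

theorem IsFourPointHyperbolic.nonneg {X : Type*} [PseudoMetricSpace X] {δ : ℝ}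
    (h : IsFourPointHyperbolic X δ) (x : X) : 0 ≤ δ := by
  simpa using h x x x x

theorem add_natCast_mul_le_of_add_le_max {b : ℕ → ℝ} {c : ℝ} (hc : 0 < c) (h₀ : b 0 + c ≤ b 1)
    (h : ∀ k, b (k + 1) + c ≤ max (b k) (b (k + 2))) (k : ℕ) : b 0 + k * c ≤ b k := by
  have step : ∀ k, b k + c ≤ b (k + 1) := by
    intro k
    induction k with
    | zero => exact h₀
    | succ k ih =>
      rcases le_max_iff.1 (h k) with hk | hk
      · linarith
      · exact hk
  induction k with
  | zero => simp
  | succ k ih => push_cast; linarith [step k]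

theorem Isometry.iterate {X : Type*} [PseudoEMetricSpace X] {f : X → X} (hf : Isometry f) :
    ∀ n, Isometry f^[n]
  | 0 => isometry_id
  | n + 1 => (hf.iterate n).comp hf

section StableLength

variable {X : Type*} [MetricSpace X] {f : X → X}

theorem Isometry.dist_iterate_add (hf : Isometry f) (m n : ℕ) (x : X) :
    dist (f^[m + n] x) (f^[m] x) = dist (f^[n] x) x := by
  rw [iterate_add_apply, (hf.iterate m).dist_eq]

theorem Isometry.subadditive_dist_iterate (hf : Isometry f) (x : X) :
    Subadditive fun n => dist (f^[n] x) x := fun m n =>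
  calc dist (f^[m + n] x) x ≤ dist (f^[m + n] x) (f^[m] x) + dist (f^[m] x) x :=
        dist_triangle _ _ _
    _ = dist (f^[m] x) x + dist (f^[n] x) x := by rw [hf.dist_iterate_add, add_comm]

theorem bddBelow_range_dist_iterate_div (f : X → X) (x : X) :
    BddBelow (Set.range fun n : ℕ => dist (f^[n + 1] x) x / (n + 1)) :=
  ⟨0, by rintro _ ⟨n, rfl⟩; positivity⟩

theorem stableLen_nonneg (f : X → X) (x : X) : 0 ≤ stableLen f x :=
  Real.iInf_nonneg fun _ => by positivity

theorem stableLen_le (f : X → X) (x : X) (n : ℕ) :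
    stableLen f x ≤ dist (f^[n + 1] x) x / (n + 1) :=
  ciInf_le (bddBelow_range_dist_iterate_div f x) n

theorem Isometry.tendsto_dist_iterate_div_stableLen (hf : Isometry f) (x : X) :
    Tendsto (fun n : ℕ => dist (f^[n] x) x / n) atTop (𝓝 (stableLen f x)) := by
  have hsub := hf.subadditive_dist_iterate x
  have hbdd : BddBelow (Set.range fun n : ℕ => dist (f^[n] x) x / n) :=
    ⟨0, by rintro _ ⟨n, rfl⟩; positivity⟩
  have hlim := hsub.tendsto_lim hbdd
  convert hlim using 2
  apply le_antisymm
  · refine ge_of_tendsto (hlim.comp (tendsto_add_atTop_nat 1)) (Eventually.of_forall fun n => ?_)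
    simpa using stableLen_le f x n
  · exact le_ciInf fun n => by simpa using hsub.lim_le_div hbdd n.succ_ne_zero

theorem Isometry.stableLen_iterate_le (hf : Isometry f) (x : X) (m : ℕ) :
    stableLen f^[m] x ≤ m * stableLen f x := by
  unfold stableLen
  rw [Real.mul_iInf_of_nonneg (Nat.cast_nonneg m)]
  refine le_ciInf fun n => (stableLen_le _ x n).trans ?_
  have h := (hf.subadditive_dist_iterate x).apply_mul_add_le m (n + 1) 0
  simp only [add_zero, iterate_zero_apply, dist_self] at h
  rw [← iterate_mul, mul_div_assoc']
  gcongr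

variable {δ : ℝ}

theorem IsFourPointHyperbolic.dist_iterate_add_le (h : IsFourPointHyperbolic X δ)
    (hf : Isometry f) (x : X) (k : ℕ) :
    dist (f^[2] x) x + dist (f^[k + 1] x) x ≤
      dist (f x) x + max (dist (f^[k] x) x) (dist (f^[k + 2] x) x) + 2 * δ := by
  have h4 := h x (f^[2] x) (f^[1] x) (f^[1 + (k + 1)] x)
  rw [dist_comm x, dist_comm _ (f^[1 + (k + 1)] x), hf.dist_iterate_add,
    show 1 + (k + 1) = 2 + k by omega, dist_comm _ (f^[2 + k] x), hf.dist_iterate_add,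
    dist_comm x, dist_comm x, show (2 : ℕ) = 1 + 1 from rfl, hf.dist_iterate_add,
    add_comm (dist (f^[1 + 1 + k] x) x), max_add_add_left] at h4
  rwa [show 1 + 1 + k = k + 2 by omega] at h4

theorem IsFourPointHyperbolic.dist_iterate_two_sub_le_stableLen (h : IsFourPointHyperbolic X δ)
    (hf : Isometry f) (x : X) : dist (f^[2] x) x - dist (f x) x - 2 * δ ≤ stableLen f x := by
  set c := dist (f^[2] x) x - dist (f x) x - 2 * δ
  rcases le_or_gt c 0 with hc | hc
  · exact hc.trans (stableLen_nonneg f x)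
  have growth := add_natCast_mul_le_of_add_le_max (b := fun k => dist (f^[k] x) x) hc
    (by
      have h₂ : dist (f^[2] x) x ≤ dist (f x) x + dist (f x) x := hf.subadditive_dist_iterate x 1 1
      show dist x x + c ≤ dist (f x) x
      linarith [dist_self x, h.nonneg x])
    (fun k => by linarith [h.dist_iterate_add_le hf x k])
  refine le_ciInf fun n => (le_div_iff₀ (by positivity)).2 ?_
  simpa [mul_comm] using growth (n + 1)

theorem IsFourPointHyperbolic.dist_iterate_sub_div_le_stableLen (h : IsFourPointHyperbolic X δ)
    (hf : Isometry f) (x : X) (n : ℕ) :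
    (dist (f^[2 * (n + 1)] x) x - dist (f^[n + 1] x) x - 2 * δ) / (n + 1) ≤ stableLen f x := by
  have key := h.dist_iterate_two_sub_le_stableLen (hf.iterate (n + 1)) x
  rw [← iterate_mul, Nat.mul_comm] at key
  have := hf.stableLen_iterate_le x (n + 1)
  push_cast at this
  rw [div_le_iff₀ (by positivity)]
  linarith

theorem IsFourPointHyperbolic.stableLen_eq_iSup (h : IsFourPointHyperbolic X δ)
    (hf : Isometry f) (x : X) :
    stableLen f x =
      ⨆ n : ℕ, (dist (f^[2 * (n + 1)] x) x - dist (f^[n + 1] x) x - 2 * δ) / (n + 1) := by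
  refine le_antisymm ?_ (ciSup_le (h.dist_iterate_sub_div_le_stableLen hf x))
  set L := stableLen f x
  have hT := hf.tendsto_dist_iterate_div_stableLen x
  have h₁ := hT.comp (tendsto_add_atTop_nat 1)
  have h₂ := hT.comp (tendsto_atTop_mono (fun n => by omega) (tendsto_add_atTop_nat 1) :
    Tendsto (fun n : ℕ => 2 * (n + 1)) atTop atTop)
  have h₃ := (tendsto_const_div_atTop_nhds_zero_nat (2 * δ)).comp (tendsto_add_atTop_nat 1)
  have hG : Tendsto (fun n : ℕ =>
      (dist (f^[2 * (n + 1)] x) x - dist (f^[n + 1] x) x - 2 * δ) / (n + 1)) atTop (𝓝 L) := by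
    convert ((h₂.const_mul 2).sub h₁).sub h₃ using 2 with n
    · simp only [comp_apply]
      push_cast
      field_simp
    · ring
  exact le_of_tendsto' hG fun n =>
    le_ciSup ⟨L, by rintro _ ⟨m, rfl⟩; exact h.dist_iterate_sub_div_le_stableLen hf x m⟩ n

end StableLength

theorem continuous_iterate_apply_of_lipschitzWith {T X : Type*} [TopologicalSpace T]
    [PseudoEMetricSpace X] {F : T → X → X} (hF : Continuous F) (K : NNReal)
    (hK : ∀ t, LipschitzWith K (F t)) (x : X) (n : ℕ) :
    Continuous fun t => (F t)^[n] x := by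
  have hjoint : Continuous fun p : T × X => F p.1 p.2 :=
    continuous_prod_of_continuous_lipschitzWith' _ K hK fun y => (continuous_apply y).comp hF
  induction n with
  | zero => exact continuous_const
  | succ n ih =>
    simp only [iterate_succ_apply']
    exact hjoint.comp (continuous_id.prodMk ih)

theorem stmt17_general {X : Type*} [MetricSpace X] (δ : ℝ)
    (hfpc : ∀ x y s t : X, dist x y + dist s t ≤
      max (dist x s + dist y t) (dist x t + dist y s) + 2 * δ)
    (x : X) :
    Continuous (fun f : {f : X → X // Isometry f ∧ Function.Surjective f} =>
      stableLen f.1 x) ∧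
    (∀ f : X → X, Isometry f → Function.Surjective f →
      stableLen f x =
        ⨆ n : ℕ, (dist (f^[2 * (n + 1)] x) x - dist (f^[n + 1] x) x - 2 * δ) / (n + 1)) := by
  have h : IsFourPointHyperbolic X δ := hfpc
  have hsup (f : X → X) (hf : Isometry f) := h.stableLen_eq_iSup hf x
  refine ⟨?_, fun f hf _ => hsup f hf⟩
  have hiter := continuous_iterate_apply_of_lipschitzWith continuous_subtype_val 1
    (fun f : {f : X → X // Isometry f ∧ Function.Surjective f} => f.2.1.lipschitz) x
  refine continuous_iff_lower_upperSemicontinuous.2 ⟨?_, ?_⟩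
  · rw [show (fun f : {f : X → X // Isometry f ∧ Function.Surjective f} => stableLen f.1 x) =
      fun f => ⨆ n : ℕ, _ from funext fun f => hsup f.1 f.2.1]
    refine lowerSemicontinuous_ciSup (fun f => ⟨stableLen f.1 x, ?_⟩) fun n => ?_
    · rintro _ ⟨n, rfl⟩
      exact h.dist_iterate_sub_div_le_stableLen f.2.1 x n
    · exact ((((hiter _).dist continuous_const).sub ((hiter _).dist continuous_const)).sub
        continuous_const).div_const _ |>.lowerSemicontinuous
  · exact upperSemicontinuous_ciInf (fun f => bddBelow_range_dist_iterate_div f.1 x) fun n =>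
      (((hiter _).dist continuous_const).div_const _).upperSemicontinuous

/-- On the isometry group of a `δ`-hyperbolic metric space
with the topology of pointwise convergence, the stable length is continuous;
the key identity is that `d∞(f)` is also the supremum of the continuous
functions `f ↦ (d(f^{2n}x,x) − d(fⁿx,x) − 2δ)/n` over `n ≥ 1`. -/
theorem stmt17 {X : Type*} [MetricSpace X] (δ : ℝ) (hδ : 0 ≤ δ)
    (hfpc : ∀ x y s t : X, dist x y + dist s t ≤
      max (dist x s + dist y t) (dist x t + dist y s) + 2 * δ)
    (x : X) :
    Continuous (fun f : {f : X → X // Isometry f ∧ Function.Surjective f} =>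
      stableLen f.1 x) ∧
    (∀ f : X → X, Isometry f → Function.Surjective f →
      stableLen f x =
        ⨆ n : ℕ, (dist (f^[2 * (n + 1)] x) x - dist (f^[n + 1] x) x - 2 * δ) / (n + 1)) :=
  stmt17_general δ hfpc x
end
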